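/- arXiv:2305.07621 — 7 statements merged into one kernel-verified Lean document; each statement's English description precedes it below -/
import Mathlib

section
/- Let X be a metric space and let K ⊆ X be a continuum (a compact connected set) with finite Hausdorff 1-measure. Then K is a Peano continuum, i.e. K is locally connected. -/
open MeasureTheory Set Metric

section Aux

variable {X : Type*} [MetricSpace X]

/-- A preconnected set containing two points has `μH[1]` at least the difference of
their distances to any base point. -/
lemma aux_measure_lb [MeasurableSpace X] [BorelSpace X]
    {C : Set X} (hC : IsPreconnected C) (p : X) {a b : X} (ha : a ∈ C) (hb : b ∈ C) :
    ENNReal.ofReal (dist p b - dist p a) ≤ μH[1] C := by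
  have hlip : LipschitzWith 1 (fun z => dist p z) := LipschitzWith.dist_right p
  have h1 : μH[1] ((fun z => dist p z) '' C) ≤ μH[1] C := by
    simpa using hlip.hausdorffMeasure_image_le (by norm_num : (0:ℝ) ≤ 1) C
  have himg : IsPreconnected ((fun z => dist p z) '' C) :=
    hC.image _ (Continuous.continuousOn (by fun_prop))
  have h2 : Set.Icc (dist p a) (dist p b) ⊆ (fun z => dist p z) '' C :=
    himg.Icc_subset ⟨a, ha, rfl⟩ ⟨b, hb, rfl⟩
  calc ENNReal.ofReal (dist p b - dist p a)
      = μH[1] (Set.Icc (dist p a) (dist p b)) := by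
        rw [hausdorffMeasure_real, Real.volume_Icc]
    _ ≤ μH[1] ((fun z => dist p z) '' C) := measure_mono h2
    _ ≤ μH[1] C := h1

/-- Connected components of a compact set are closed. -/
lemma aux_comp_closed {F : Set X} (hF : IsCompact F) (y : X) :
    IsClosed (connectedComponentIn F y) := by
  by_cases hy : y ∈ F
  · rw [connectedComponentIn_eq_image hy]
    haveI : CompactSpace F := isCompact_iff_compactSpace.mp hF
    exact (isClosed_connectedComponent.isCompact.image continuous_subtype_val).isClosed
  · rw [connectedComponentIn_eq_empty hy]
    exact isClosed_empty

/-- Boundary bumping: the connected component of a point of `K ∩ closedBall x ε` reaches the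
sphere, provided `K` is a continuum going beyond the ball. -/
lemma aux_bump {K : Set X} (hcomp : IsCompact K) (hconn : IsPreconnected K) {x : X} {ε : ℝ}
    (hout : ∃ k ∈ K, k ∉ Metric.closedBall x ε) {y : X}
    (hy : y ∈ K ∩ Metric.closedBall x ε) :
    ∃ z ∈ connectedComponentIn (K ∩ Metric.closedBall x ε) y, dist z x = ε := by
  set F : Set X := K ∩ Metric.closedBall x ε with hFdef
  have hFc : IsCompact F := hcomp.inter_right Metric.isClosed_closedBall
  haveI : CompactSpace F := isCompact_iff_compactSpace.mp hFc
  set S : Set F := {z : F | (z : X) ∈ closure (K \ Metric.closedBall x ε)} with hSdef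
  have hScl : IsClosed S := isClosed_closure.preimage continuous_subtype_val
  set y' : F := ⟨y, hy⟩ with hy'def
  -- main claim: the component of y' meets S
  have hmeet : (S ∩ connectedComponent y').Nonempty := by
    by_contra hdisj
    rw [Set.not_nonempty_iff_eq_empty] at hdisj
    rw [connectedComponent_eq_iInter_isClopen] at hdisj
    obtain ⟨u, hu⟩ := hScl.isCompact.elim_finite_subfamily_closed _
      (fun s : { s : Set F // IsClopen s ∧ y' ∈ s } => s.2.1.1) hdisj
    set U : Set F := ⋂ i ∈ u, (i : Set F) with hUdef
    have hUclopen : IsClopen U := isClopen_biInter_finset fun i _ => i.2.1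
    have hyU : y' ∈ U := Set.mem_iInter₂.mpr fun i _ => i.2.2
    have hUS : ∀ z ∈ U, z ∉ S := by
      intro z hz hzS
      have : z ∈ S ∩ ⋂ i ∈ u, (i : Set F) := ⟨hzS, hz⟩
      rw [hu] at this
      exact this
    -- push down to K
    set V : Set X := Subtype.val '' U with hVdef
    have hVcl : IsClosed V :=
      ((hUclopen.1.isCompact).image continuous_subtype_val).isClosed
    have hVF : V ⊆ F := by rintro _ ⟨w, _, rfl⟩; exact w.2
    set W : Set K := Subtype.val ⁻¹' V with hWdef
    haveI : PreconnectedSpace K := Subtype.preconnectedSpace hconn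
    have hWclosed : IsClosed W := hVcl.preimage continuous_subtype_val
    obtain ⟨O, hOopen, hOU⟩ := isOpen_induced_iff.mp hUclopen.2
    have hWopen : IsOpen W := by
      rw [isOpen_iff_mem_nhds]
      intro z hz
      obtain ⟨zF, hzFU, hzF⟩ := hz
      have hznotcl : (z : X) ∉ closure (K \ Metric.closedBall x ε) := by
        have := hUS zF hzFU
        rw [hSdef] at this
        simpa [hzF] using this
      obtain ⟨δ, hδ, hball⟩ : ∃ δ > 0, Metric.ball (z : X) δ ∩ (K \ Metric.closedBall x ε) = ∅ := by
        have : (z : X) ∈ (closure (K \ Metric.closedBall x ε))ᶜ := hznotcl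
        obtain ⟨δ, hδ, hb⟩ := Metric.isOpen_iff.mp isClosed_closure.isOpen_compl _ this
        exact ⟨δ, hδ, by
          rw [Set.eq_empty_iff_forall_notMem]
          intro w ⟨hw1, hw2⟩
          exact hb hw1 (subset_closure hw2)⟩
      have hzO : (z : X) ∈ O := by
        have : zF ∈ Subtype.val ⁻¹' O := hOU.symm ▸ hzFU
        simpa [hzF] using this
      refine Filter.mem_of_superset ?_ (?_ : {w : K | (w : X) ∈ O ∩ Metric.ball (z : X) δ} ⊆ W)
      · exact (((hOopen.inter Metric.isOpen_ball).preimage continuous_subtype_val).mem_nhds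
          (by exact ⟨hzO, Metric.mem_ball_self hδ⟩))
      · intro w hw
        have hwF : (w : X) ∈ F := by
          refine ⟨w.2, ?_⟩
          by_contra hwb
          have : (w : X) ∈ Metric.ball (z : X) δ ∩ (K \ Metric.closedBall x ε) :=
            ⟨hw.2, w.2, hwb⟩
          rw [hball] at this
          exact this
        have : (⟨(w : X), hwF⟩ : F) ∈ U := by
          rw [← hOU]; exact hw.1
        exact ⟨⟨(w : X), hwF⟩, this, rfl⟩
    -- W is clopen, nonempty, proper: contradiction with connectedness of K
    have hWne : W.Nonempty := ⟨⟨y, hy.1⟩, ⟨y', hyU, rfl⟩⟩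
    obtain ⟨k, hkK, hkout⟩ := hout
    have hWproper : W ≠ Set.univ := by
      intro h
      have : (⟨k, hkK⟩ : K) ∈ W := h ▸ Set.mem_univ _
      exact hkout (hVF this).2
    rcases isClopen_iff.mp ⟨hWclosed, hWopen⟩ with h | h
    · exact hWne.ne_empty h
    · exact hWproper h
  obtain ⟨z, hzS, hzC⟩ := hmeet
  refine ⟨(z : X), ?_, ?_⟩
  · rw [connectedComponentIn_eq_image hy]
    exact ⟨z, hzC, rfl⟩
  · have h1 : dist (z : X) x ≤ ε := z.2.2
    have h2 : ε ≤ dist (z : X) x := by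
      have hsub : K \ Metric.closedBall x ε ⊆ {w : X | ε ≤ dist w x} := by
        intro w hw
        exact le_of_lt (by simpa [Metric.mem_closedBall] using hw.2)
      have : (z : X) ∈ {w : X | ε ≤ dist w x} :=
        closure_minimal hsub (isClosed_le continuous_const (by fun_prop)) hzS
      exact this
    linarith

end Aux

/-- A continuum of finite Hausdorff 1-measure is a Peano continuum (locally connected). -/
theorem continuum_finite_H1_locallyConnected {X : Type*} [MetricSpace X]
    [MeasurableSpace X] [BorelSpace X] (K : Set X)
    (hcomp : IsCompact K) (hconn : IsConnected K)
    (hfin : μH[1] K < ⊤) :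
    LocallyConnectedSpace K := by
  rw [locallyConnectedSpace_iff_connected_subsets]
  rintro ⟨x, hxK⟩ U hU
  obtain ⟨ε', hε', hball⟩ := Metric.mem_nhds_iff.mp hU
  set ε : ℝ := ε' / 2 with hεdef
  have hε : 0 < ε := by positivity
  have hεlt : ε < ε' := by simpa [hεdef] using half_lt_self hε'
  haveI : PreconnectedSpace K := Subtype.preconnectedSpace hconn.isPreconnected
  by_cases hsub : K ⊆ Metric.closedBall x ε
  · refine ⟨Set.univ, Filter.univ_mem, isPreconnected_univ, ?_⟩
    intro z _
    refine hball ?_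
    have : dist (z : X) x ≤ ε := hsub z.2
    exact Metric.mem_ball.mpr (by rw [Subtype.dist_eq]; exact lt_of_le_of_lt this hεlt)
  · obtain ⟨k, hkK, hkout⟩ := Set.not_subset.mp hsub
    set F : Set X := K ∩ Metric.closedBall x ε with hFdef
    have hFc : IsCompact F := hcomp.inter_right Metric.isClosed_closedBall
    have hxF : x ∈ F := ⟨hxK, Metric.mem_closedBall_self hε.le⟩
    set C : Set X := connectedComponentIn F x with hCdef
    -- lower bound on components of points near x
    have hlb : ∀ y ∈ K ∩ Metric.ball x (ε / 2),
        ENNReal.ofReal (ε / 2) ≤ μH[1] (connectedComponentIn F y) := by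
      intro y hy
      have hyF : y ∈ F := ⟨hy.1, Metric.mem_closedBall.mpr (le_of_lt
        (lt_of_lt_of_le (Metric.mem_ball.mp hy.2) (by linarith)))⟩
      obtain ⟨z, hzC, hz⟩ := aux_bump hcomp hconn.isPreconnected ⟨k, hkK, hkout⟩ hyF
      have hyC : y ∈ connectedComponentIn F y := mem_connectedComponentIn hyF
      have := aux_measure_lb (isPreconnected_connectedComponentIn) x hyC hzC
      refine le_trans (ENNReal.ofReal_le_ofReal ?_) this
      have h1 : dist x z = ε := by rw [dist_comm]; exact hz
      have h2 : dist x y < ε / 2 := by rw [dist_comm]; exact Metric.mem_ball.mp hy.2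
      linarith
    -- the family of components of points near x is finite
    have hfam : {D : Set X | ∃ y ∈ K ∩ Metric.ball x (ε / 2),
        D = connectedComponentIn F y}.Finite := by
      by_contra hinf
      have hinf' : {D : Set X | ∃ y ∈ K ∩ Metric.ball x (ε / 2),
          D = connectedComponentIn F y}.Infinite := hinf
      set e := Set.Infinite.natEmbedding _ hinf' with hedef
      have hdisj : Pairwise (Function.onFun Disjoint fun n => ((e n : _) : Set X)) := by
        intro m n hmn
        have hne : ((e m : _) : Set X) ≠ ((e n : _) : Set X) := by
          intro h
          exact hmn (e.injective (Subtype.ext h))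
        obtain ⟨ym, hym, hDm⟩ := (e m).2
        obtain ⟨yn, hyn, hDn⟩ := (e n).2
        rw [Function.onFun, Set.disjoint_left]
        intro z hzm hzn
        rw [hDm] at hzm
        rw [hDn] at hzn
        exact hne (by rw [hDm, hDn, connectedComponentIn_eq hzm, connectedComponentIn_eq hzn])
      have hmeas : ∀ n : ℕ, MeasurableSet ((e n : _) : Set X) := by
        intro n
        obtain ⟨y, hy, hD⟩ := (e n).2
        rw [hD]
        exact (aux_comp_closed hFc y).measurableSet
      have hub : μH[1] (⋃ n, ((e n : _) : Set X)) ≤ μH[1] K := by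
        refine measure_mono (Set.iUnion_subset fun n => ?_)
        obtain ⟨y, hy, hD⟩ := (e n).2
        rw [hD]
        exact (connectedComponentIn_subset F y).trans Set.inter_subset_left
      rw [measure_iUnion hdisj hmeas] at hub
      have htop : (⊤ : ENNReal) ≤ ∑' n : ℕ, μH[1] ((e n : _) : Set X) := by
        have hc : (ENNReal.ofReal (ε / 2)) ≠ 0 := by
          simp only [ne_eq, ENNReal.ofReal_eq_zero, not_le]; linarith
        calc (⊤ : ENNReal) = ∑' _ : ℕ, ENNReal.ofReal (ε / 2) :=
              (ENNReal.tsum_const_eq_top_of_ne_zero hc).symm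
          _ ≤ ∑' n : ℕ, μH[1] ((e n : _) : Set X) := ?_
        refine ENNReal.tsum_le_tsum fun n => ?_
        obtain ⟨y, hy, hD⟩ := (e n).2
        rw [hD]
        exact hlb y hy
      exact absurd (lt_of_le_of_lt (htop.trans hub) hfin) (by simp)
    -- all but the component of x stay away from x
    set B : Set X := ⋃ D ∈ {D : Set X | ∃ y ∈ K ∩ Metric.ball x (ε / 2),
        D = connectedComponentIn F y} \ {C}, D with hBdef
    have hBclosed : IsClosed B := by
      refine hfam.diff.isClosed_biUnion ?_
      rintro D ⟨⟨y, hy, hD⟩, _⟩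
      rw [hD]
      exact aux_comp_closed hFc y
    have hxB : x ∉ B := by
      intro hx
      simp only [hBdef, Set.mem_iUnion] at hx
      obtain ⟨D, ⟨⟨y, hy, hD⟩, hDC⟩, hxD⟩ := hx
      refine hDC ?_
      rw [Set.mem_singleton_iff, hD, hCdef]
      rw [hD] at hxD
      exact connectedComponentIn_eq hxD
    obtain ⟨δ, hδ, hδB⟩ := Metric.isOpen_iff.mp hBclosed.isOpen_compl x hxB
    set δ' : ℝ := min δ (ε / 2) with hδ'def
    have hδ' : 0 < δ' := lt_min hδ (by positivity)
    have hKC : K ∩ Metric.ball x δ' ⊆ C := by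
      rintro y ⟨hyK, hyb⟩
      have hy2 : y ∈ K ∩ Metric.ball x (ε / 2) :=
        ⟨hyK, Metric.ball_subset_ball (min_le_right _ _) hyb⟩
      have hyF : y ∈ F := ⟨hyK, Metric.mem_closedBall.mpr (le_of_lt
        (lt_of_lt_of_le (Metric.mem_ball.mp hy2.2) (by linarith)))⟩
      by_contra hyC
      have hDy : connectedComponentIn F y ∈ {D : Set X | ∃ y ∈ K ∩ Metric.ball x (ε / 2),
          D = connectedComponentIn F y} \ {C} := by
        refine ⟨⟨y, hy2, rfl⟩, ?_⟩
        intro h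
        rw [Set.mem_singleton_iff] at h
        exact hyC (h ▸ mem_connectedComponentIn hyF)
      have hyB : y ∈ B := Set.mem_biUnion hDy (mem_connectedComponentIn hyF)
      exact hδB (Metric.ball_subset_ball (min_le_left _ _) hyb) hyB
    -- conclude
    refine ⟨Subtype.val ⁻¹' C, ?_, ?_, ?_⟩
    · refine Filter.mem_of_superset (Metric.ball_mem_nhds _ hδ') ?_
      intro z hz
      exact hKC ⟨z.2, by simpa [Metric.mem_ball, Subtype.dist_eq] using hz⟩
    · rw [← Topology.IsInducing.subtypeVal.isPreconnected_image]
      have : Subtype.val '' (Subtype.val ⁻¹' C : Set K) = C := by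
        rw [Set.image_preimage_eq_inter_range, Subtype.range_coe]
        exact Set.inter_eq_self_of_subset_left
          ((connectedComponentIn_subset F x).trans Set.inter_subset_left)
      rw [this]
      exact isPreconnected_connectedComponentIn
    · intro z hz
      refine hball ?_
      have : dist (z : X) x ≤ ε := ((connectedComponentIn_subset F x) hz).2
      exact Metric.mem_ball.mpr (by rw [Subtype.dist_eq]; exact lt_of_le_of_lt this hεlt)
end

section
/- Let X be a metric space and γ : [a,b] → X a curve. Then ℓ(γ) ≥ H^1(|γ|), where |γ| = γ([a,b]) is the trace of γ. Moreover, if γ is injective then ℓ(γ) = H^1(|γ|). -/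
open MeasureTheory

/-- H¹ of a connected curve image dominates the distance between endpoints. -/
lemma edist_le_H1_image_aux {X : Type*} [MetricSpace X]
    [MeasurableSpace X] [BorelSpace X]
    {γ : ℝ → X} {x y : ℝ} (hxy : x ≤ y) (hγ : ContinuousOn γ (Set.Icc x y)) :
    edist (γ x) (γ y) ≤ μH[1] (γ '' Set.Icc x y) := by
  set S := γ '' Set.Icc x y with hS
  set f : X → ℝ := fun z => dist (γ x) z with hf
  have hfl : LipschitzWith 1 f := LipschitzWith.dist_right (γ x)
  have hconn : IsPreconnected (f '' S) := by
    rw [hS, Set.image_image]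
    exact (isPreconnected_Icc).image _ (hfl.continuous.comp_continuousOn hγ)
  have h0 : (0 : ℝ) ∈ f '' S := ⟨γ x, ⟨x, ⟨le_rfl, hxy⟩, rfl⟩, by simp [hf]⟩
  have hd : dist (γ x) (γ y) ∈ f '' S := ⟨γ y, ⟨y, ⟨hxy, le_rfl⟩, rfl⟩, rfl⟩
  have hsub : Set.Icc 0 (dist (γ x) (γ y)) ⊆ f '' S := hconn.Icc_subset h0 hd
  calc edist (γ x) (γ y) = ENNReal.ofReal (dist (γ x) (γ y)) := by rw [edist_dist]
    _ = volume (Set.Icc 0 (dist (γ x) (γ y))) := by rw [Real.volume_Icc]; simp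
    _ = μH[1] (Set.Icc 0 (dist (γ x) (γ y))) := by rw [hausdorffMeasure_real]
    _ ≤ μH[1] (f '' S) := measure_mono hsub
    _ ≤ 1 * μH[1] S := by
        simpa using hfl.hausdorffMeasure_image_le (zero_le_one) S
    _ = μH[1] S := one_mul _

/-- The length of a curve dominates the Hausdorff 1-measure of its trace,
with equality for injective curves (Jordan arcs). -/
theorem length_ge_H1_trace {X : Type*} [MetricSpace X]
    [MeasurableSpace X] [BorelSpace X]
    (a b : ℝ) (hab : a ≤ b) (γ : ℝ → X) (hγ : ContinuousOn γ (Set.Icc a b)) :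
    μH[1] (γ '' Set.Icc a b) ≤ eVariationOn γ (Set.Icc a b) ∧
      (Set.InjOn γ (Set.Icc a b) →
        eVariationOn γ (Set.Icc a b) = μH[1] (γ '' Set.Icc a b)) := by
  classical
  set I := Set.Icc a b with hI
  set V := eVariationOn γ I with hV
  have part1 : μH[1] (γ '' I) ≤ V := by
    rcases eq_or_ne V ⊤ with hVtop | hVfin
    · rw [hVtop]; exact le_top
    set φ : ℝ → ℝ := fun t => (eVariationOn γ (I ∩ Set.Icc a t)).toReal with hφ
    have hfin : ∀ s : Set ℝ, s ⊆ I → eVariationOn γ s ≠ ⊤ :=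
      fun s hs => ne_top_of_le_ne_top hVfin (eVariationOn.mono γ hs)
    have key : ∀ s t : ℝ, s ∈ I → t ∈ I → s ≤ t →
        dist (γ s) (γ t) ≤ φ t - φ s := by
      intro s t hs ht hst
      have hadd := eVariationOn.Icc_add_Icc γ (s := I) hs.1 hst hs
      have h1 : eVariationOn γ (I ∩ Set.Icc a s) ≠ ⊤ := hfin _ Set.inter_subset_left
      have h2 : eVariationOn γ (I ∩ Set.Icc s t) ≠ ⊤ := hfin _ Set.inter_subset_left
      have heq : φ t - φ s = (eVariationOn γ (I ∩ Set.Icc s t)).toReal := by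
        simp only [hφ]
        rw [← hadd, ENNReal.toReal_add h1 h2]
        ring
      rw [heq]
      exact BoundedVariationOn.dist_le h2 ⟨hs, le_rfl, hst⟩ ⟨ht, hst, le_rfl⟩
    have key' : ∀ s ∈ I, ∀ t ∈ I, dist (γ s) (γ t) ≤ dist (φ s) (φ t) := by
      intro s hs t ht
      rcases le_total s t with h | h
      · refine (key s t hs ht h).trans ?_
        rw [Real.dist_eq, abs_sub_comm]
        exact le_abs_self _
      · rw [dist_comm (γ s), dist_comm (φ s)]
        refine (key t s ht hs h).trans ?_
        rw [Real.dist_eq, abs_sub_comm]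
        exact le_abs_self _
    set ψ : ℝ → X := fun y => γ (Function.invFunOn φ I y) with hψ
    have hψφ : ∀ t ∈ I, ψ (φ t) = γ t := by
      intro t ht
      have h1 : Function.invFunOn φ I (φ t) ∈ I := Function.invFunOn_mem ⟨t, ht, rfl⟩
      have h2 : φ (Function.invFunOn φ I (φ t)) = φ t := Function.invFunOn_eq ⟨t, ht, rfl⟩
      have h3 := key' _ h1 t ht
      rw [h2, dist_self] at h3
      have h4 : dist (γ (Function.invFunOn φ I (φ t))) (γ t) = 0 :=
        le_antisymm h3 dist_nonneg
      simpa [hψ, dist_eq_zero] using h4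
    have hLip : LipschitzOnWith 1 ψ (φ '' I) := by
      rw [lipschitzOnWith_iff_dist_le_mul]
      rintro y1 ⟨s, hs, rfl⟩ y2 ⟨t, ht, rfl⟩
      have h1 : Function.invFunOn φ I (φ s) ∈ I := Function.invFunOn_mem ⟨s, hs, rfl⟩
      have h2 : φ (Function.invFunOn φ I (φ s)) = φ s := Function.invFunOn_eq ⟨s, hs, rfl⟩
      have h3 : Function.invFunOn φ I (φ t) ∈ I := Function.invFunOn_mem ⟨t, ht, rfl⟩
      have h4 : φ (Function.invFunOn φ I (φ t)) = φ t := Function.invFunOn_eq ⟨t, ht, rfl⟩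
      simp only [NNReal.coe_one, one_mul, hψ]
      calc dist (γ (Function.invFunOn φ I (φ s))) (γ (Function.invFunOn φ I (φ t)))
          ≤ dist (φ (Function.invFunOn φ I (φ s))) (φ (Function.invFunOn φ I (φ t))) :=
            key' _ h1 _ h3
        _ = dist (φ s) (φ t) := by rw [h2, h4]
    have himg : γ '' I ⊆ ψ '' (φ '' I) := by
      rintro _ ⟨t, ht, rfl⟩
      exact ⟨φ t, ⟨t, ht, rfl⟩, hψφ t ht⟩
    have hrange : φ '' I ⊆ Set.Icc 0 V.toReal := by
      rintro _ ⟨t, ht, rfl⟩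
      refine ⟨ENNReal.toReal_nonneg, ?_⟩
      exact ENNReal.toReal_mono hVfin (eVariationOn.mono γ Set.inter_subset_left)
    calc μH[1] (γ '' I) ≤ μH[1] (ψ '' (φ '' I)) := measure_mono himg
      _ ≤ 1 * μH[1] (φ '' I) := by
          simpa using hLip.hausdorffMeasure_image_le (zero_le_one)
      _ = μH[1] (φ '' I) := one_mul _
      _ ≤ μH[1] (Set.Icc 0 V.toReal) := measure_mono hrange
      _ = ENNReal.ofReal V.toReal := by
          rw [hausdorffMeasure_real, Real.volume_Icc]; simp
      _ = V := ENNReal.ofReal_toReal hVfin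
  refine ⟨part1, fun hinj => le_antisymm ?_ part1⟩
  haveI : NullSingletonClass (μH[1] : Measure X) := Measure.noAtoms_hausdorff X one_pos
  refine iSup_le ?_
  rintro ⟨n, u, hu, us⟩
  dsimp only
  set B : Set X := γ '' Set.range u with hB
  have hB0 : μH[1] B = 0 := ((Set.countable_range u).image γ).measure_zero _
  have hBmeas : MeasurableSet B := ((Set.countable_range u).image γ).measurableSet
  set A : ℕ → Set X := fun i => γ '' Set.Icc (u i) (u (i + 1)) with hA
  have hIccsub : ∀ i, Set.Icc (u i) (u (i + 1)) ⊆ I := by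
    intro i t ht
    exact ⟨(us i).1.trans ht.1, ht.2.trans (us (i + 1)).2⟩
  have hAsub : ∀ i, A i ⊆ γ '' I := fun i => Set.image_mono (f := γ) (hIccsub i)
  have hAmeas : ∀ i, MeasurableSet (A i \ B) := by
    intro i
    exact ((isCompact_Icc.image_of_continuousOn (hγ.mono (hIccsub i))).measurableSet).diff hBmeas
  have hdd : ∀ i j : ℕ, i < j → Disjoint (A i \ B) (A j \ B) := by
    intro i j hlt
    rw [Set.disjoint_left]
    rintro z ⟨⟨s, hsmem, rfl⟩, hzB⟩ ⟨⟨t, htmem, hts⟩, _⟩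
    have hst : t = s := hinj (hIccsub j htmem) (hIccsub i hsmem) hts
    subst hst
    have h1 : t ≤ u j := hsmem.2.trans (hu hlt)
    have h2 : u j ≤ t := htmem.1
    have : t = u j := le_antisymm h1 h2
    exact hzB ⟨u j, ⟨j, rfl⟩, by rw [← this]⟩
  have hdisj : (↑(Finset.range n) : Set ℕ).PairwiseDisjoint fun i => A i \ B := by
    intro i _ j _ hij
    rcases hij.lt_or_gt with h | h
    · exact hdd i j h
    · exact (hdd j i h).symm
  have hsum : ∀ i ∈ Finset.range n,
      edist (γ (u (i + 1))) (γ (u i)) ≤ μH[1] (A i \ B) := by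
    intro i _
    have h1 : edist (γ (u i)) (γ (u (i + 1))) ≤ μH[1] (A i) :=
      edist_le_H1_image_aux (hu (Nat.le_succ i)) (hγ.mono (hIccsub i))
    rw [edist_comm]
    rwa [measure_diff_null hB0]
  calc ∑ i ∈ Finset.range n, edist (γ (u (i + 1))) (γ (u i))
      ≤ ∑ i ∈ Finset.range n, μH[1] (A i \ B) := Finset.sum_le_sum hsum
    _ = μH[1] (⋃ i ∈ Finset.range n, (A i \ B)) :=
        (measure_biUnion_finset hdisj fun i _ => hAmeas i).symm
    _ ≤ μH[1] (γ '' I) := by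
        refine measure_mono ?_
        exact Set.iUnion₂_subset fun i _ => Set.diff_subset.trans (hAsub i)
end

section
/- Let Y be a metric space that is locally upper Ahlfors 2-regular with constant K > 0, meaning H²(B(x,r)) ≤ K r² for all x in a neighborhood of a given curve and all sufficiently small r. Let γ be a rectifiable curve in Y. Then for all sufficiently small r > 0, the open r-neighborhood N_r(|γ|) of the trace of γ satisfies H²(N_r(|γ|)) ≤ 2Kr·ℓ(γ) + 8Kr². -/
open MeasureTheory

set_option maxHeartbeats 1000000 in
/-- Area bound on small neighborhoods of a rectifiable curve in a locally
upper Ahlfors 2-regular space: `H²(N_r(|γ|)) ≤ 2Kr·ℓ(γ) + 8Kr²`. -/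
theorem neighborhood_area_bound {Y : Type*} [MetricSpace Y]
    [MeasurableSpace Y] [BorelSpace Y]
    (K : ℝ) (hK : 0 < K)
    (γ : ℝ → Y) (hγ : ContinuousOn γ (Set.Icc 0 1))
    (L : ℝ) (hL : eVariationOn γ (Set.Icc 0 1) = ENNReal.ofReal L)
    (r : ℝ) (hr : 0 < r) (hrL : r < L / 2)
    (hball : ∀ x ∈ γ '' Set.Icc (0 : ℝ) 1,
      μH[2] (Metric.ball x (2 * r)) ≤ ENNReal.ofReal (4 * K * r ^ 2)) :
    μH[2] (Metric.thickening r (γ '' Set.Icc (0 : ℝ) 1)) ≤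
      ENNReal.ofReal (2 * K * r * L + 8 * K * r ^ 2) := by
  classical
  have hLpos : 0 < L := by linarith
  -- small parameter ε and radius defect ρ
  set ε : ℝ := r ^ 2 / (L + 2 * r) with hεdef
  have hεpos : 0 < ε := by positivity
  have hεr : 2 * ε < r := by
    have h : ε < r / 2 := by
      rw [hεdef, div_lt_iff₀ (by linarith)]
      nlinarith
    linarith
  set ρ : ℝ := r - 2 * ε with hρdef
  have hρpos : 0 < ρ := by simp only [hρdef]; linarith
  -- uniform continuity
  obtain ⟨δ, hδpos, hδ⟩ :=
    Metric.uniformContinuousOn_iff.mp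
      ((isCompact_Icc).uniformContinuousOn_of_continuous hγ) ε hεpos
  set M : ℕ := ⌊1 / δ⌋₊ + 1 with hMdef
  have hMpos : (0 : ℝ) < M := by positivity
  have hMδ : 1 / (M : ℝ) < δ := by
    rw [div_lt_iff₀ hMpos]
    have h1 : 1 / δ < (M : ℝ) := by
      simpa [hMdef] using Nat.lt_floor_add_one (1 / δ)
    calc (1 : ℝ) = δ * (1 / δ) := by field_simp
    _ < δ * M := by
      exact mul_lt_mul_of_pos_left h1 hδpos
  -- partition points
  set u : ℕ → ℝ := fun j => min ((j : ℝ) / M) 1 with hudef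
  have humem : ∀ j, u j ∈ Set.Icc (0 : ℝ) 1 := fun j =>
    ⟨le_min (by positivity) zero_le_one, min_le_right _ _⟩
  have humono : Monotone u := by
    intro a b hab
    exact min_le_min (by gcongr) le_rfl
  have hustep : ∀ j, u (j + 1) ≤ u j + 1 / M := by
    intro j
    have h1 : ((j + 1 : ℕ) : ℝ) / M = (j : ℝ) / M + 1 / M := by
      push_cast; ring
    have h2 : u (j + 1) ≤ min ((j : ℝ) / M + 1 / M) (1 + 1 / M) := by
      have h0 : (0:ℝ) ≤ 1 / M := by positivity
      refine min_le_min (le_of_eq h1) (by linarith)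
    simpa [min_add_add_right] using h2
  set p : ℕ → Y := fun j => γ (u j) with hpdef
  set d : ℕ → ℝ := fun j => dist (p j) (p (j + 1)) with hddef
  set c : ℕ → ℝ := fun n => ∑ k ∈ Finset.range n, d k with hcdef
  have hdnonneg : ∀ j, 0 ≤ d j := fun j => dist_nonneg
  have hcsucc : ∀ n, c (n + 1) = c n + d n := by
    intro n; simp [hcdef, Finset.sum_range_succ]
  have hcmono : Monotone c := by
    intro a b hab
    simp only [hcdef]
    exact Finset.sum_le_sum_of_subset_of_nonneg
      (Finset.range_subset_range.2 hab) (fun i _ _ => hdnonneg i)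
  have hcnonneg : ∀ n, 0 ≤ c n := fun n =>
    Finset.sum_nonneg fun i _ => hdnonneg i
  -- step bound
  have hstep : ∀ j, d j < ε := by
    intro j
    apply hδ (u j) (humem j) (u (j + 1)) (humem (j + 1))
    rw [Real.dist_eq, abs_of_nonpos (by linarith [humono (Nat.le_succ j)])]
    have := hustep j
    linarith
  -- length bound
  have hcL : ∀ n, c n ≤ L := by
    intro n
    have hsum := eVariationOn.sum_le (f := γ) (n := n) humono humem
    rw [hL] at hsum
    have hfin : ∀ i ∈ Finset.range n, edist (γ (u (i + 1))) (γ (u i)) ≠ ⊤ :=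
      fun i _ => edist_ne_top _ _
    have h1 : c n = (∑ i ∈ Finset.range n, edist (γ (u (i + 1))) (γ (u i))).toReal := by
      rw [ENNReal.toReal_sum hfin]
      refine Finset.sum_congr rfl fun i _ => ?_
      rw [hddef]
      simp only [hpdef]
      rw [dist_edist, edist_comm]
    rw [h1]
    calc (∑ i ∈ Finset.range n, edist (γ (u (i + 1))) (γ (u i))).toReal
        ≤ (ENNReal.ofReal L).toReal := ENNReal.toReal_mono ENNReal.ofReal_ne_top hsum
      _ = L := ENNReal.toReal_ofReal hLpos.le
  -- chain bound
  have hchain : ∀ j k, j ≤ k → dist (p j) (p k) ≤ c k - c j := by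
    intro j k hjk
    induction k, hjk using Nat.le_induction with
    | base => simp
    | succ n hn ih =>
      calc dist (p j) (p (n + 1)) ≤ dist (p j) (p n) + dist (p n) (p (n + 1)) :=
        dist_triangle _ _ _
      _ ≤ (c n - c j) + d n := by exact add_le_add ih le_rfl
      _ = c (n + 1) - c j := by rw [hcsucc]; ring
  have hchain' : ∀ j k, dist (p j) (p k) ≤ |c j - c k| := by
    intro j k
    rcases le_total j k with h | h
    · rw [abs_sub_comm, abs_of_nonneg (by linarith [hcmono h])]
      exact hchain j k h
    · rw [abs_of_nonneg (by linarith [hcmono h]), dist_comm]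
      exact hchain k j h
  -- c is constant beyond M
  have huM : ∀ k, M ≤ k → u k = 1 := by
    intro k hk
    have : (1 : ℝ) ≤ (k : ℝ) / M := by
      rw [le_div_iff₀ hMpos]
      simpa using (Nat.cast_le (α := ℝ)).2 hk
    simp [hudef, min_eq_right, this]
  have hcM : ∀ k, M ≤ k → c k = c M := by
    intro k hk
    induction k with
    | zero => rw [Nat.le_zero.mp hk]
    | succ n ih =>
      rcases Nat.lt_or_ge M (n + 1) with h | h
      · have hn : M ≤ n := by omega
        have hd : d n = 0 := by
          simp [hddef, hpdef, huM n hn, huM (n + 1) (by omega)]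
        rw [hcsucc, ih hn, hd, add_zero]
      · have : n + 1 = M := by omega
        rw [this]
  -- number of balls
  set N : ℕ := ⌊L / (2 * ρ)⌋₊ + 1 with hNdef
  -- selection function
  set sel : ℕ → ℕ := fun i =>
    if h : ∃ k, (2 * (i : ℝ) + 1) * ρ ≤ c k then Nat.find h else M with hseldef
  have hselM : ∀ i, sel i ≤ M := by
    intro i
    by_cases h : ∃ k, (2 * (i : ℝ) + 1) * ρ ≤ c k
    · have hsel : sel i = Nat.find h := by simp only [hseldef]; exact dif_pos h
      have hcMge : (2 * (i : ℝ) + 1) * ρ ≤ c M := by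
        obtain ⟨k, hk⟩ := id h
        rcases le_total k M with hkM | hkM
        · exact hk.trans (hcmono hkM)
        · rw [← hcM k hkM]; exact hk
      rw [hsel]
      exact Nat.find_le hcMge
    · have : sel i = M := by simp only [hseldef]; exact dif_neg h
      rw [this]

  -- the covering claim
  have hcover : ∀ j, j ≤ M → ∃ i, i < N ∧ dist (p j) (p (sel i)) ≤ ρ + ε := by
    intro j hjM
    set i : ℕ := ⌊c j / (2 * ρ)⌋₊ with hidef
    have h2ρ : (0 : ℝ) < 2 * ρ := by linarith
    have hlow : 2 * (i : ℝ) * ρ ≤ c j := by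
      have := Nat.floor_le (by positivity : (0:ℝ) ≤ c j / (2 * ρ))
      rw [hidef]
      calc 2 * (↑⌊c j / (2 * ρ)⌋₊ : ℝ) * ρ = ↑⌊c j / (2 * ρ)⌋₊ * (2 * ρ) := by ring
        _ ≤ (c j / (2 * ρ)) * (2 * ρ) := by gcongr
        _ = c j := by field_simp
    have hhigh : c j < 2 * ((i : ℝ) + 1) * ρ := by
      have := Nat.lt_floor_add_one (c j / (2 * ρ))
      rw [hidef]
      calc c j = (c j / (2 * ρ)) * (2 * ρ) := by field_simp
        _ < (↑⌊c j / (2 * ρ)⌋₊ + 1) * (2 * ρ) := by gcongr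
        _ = 2 * (↑⌊c j / (2 * ρ)⌋₊ + 1) * ρ := by ring
    have hiN : i < N := by
      rw [hNdef, Nat.lt_succ_iff, hidef]
      exact Nat.floor_le_floor ((div_le_div_iff_of_pos_right h2ρ).mpr (hcL j))
    refine ⟨i, hiN, ?_⟩
    set ℓ : ℝ := (2 * (i : ℝ) + 1) * ρ with hℓdef
    have hℓpos : 0 < ℓ := by positivity
    have hbound : |c j - c (sel i)| ≤ ρ + ε := by
      by_cases h : ∃ k, (2 * (i : ℝ) + 1) * ρ ≤ c k
      · have hsel : sel i = Nat.find h := by simp only [hseldef]; exact dif_pos h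
        rw [hsel]
        set m : ℕ := Nat.find h with hmdef
        have hm : ℓ ≤ c m := Nat.find_spec h
        have hm1 : m ≠ 0 := by
          intro h0
          rw [h0] at hm
          simp [hcdef] at hm
          linarith
        have hmlt : c (m - 1) < ℓ := by
          by_contra hcon
          push_neg at hcon
          have h9 : Nat.find h ≤ m - 1 := Nat.find_le hcon
          rw [← hmdef] at h9
          omega
        have hcmε : c m < ℓ + ε := by
          have h5 : c m = c (m - 1) + d (m - 1) := by
            conv_lhs => rw [show m = (m - 1) + 1 by omega]
            exact hcsucc _
          have := hstep (m - 1)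
          linarith
        rw [abs_le]
        have h6 : c j ≥ ℓ - ρ := by
          have : ℓ - ρ = 2 * (i : ℝ) * ρ := by rw [hℓdef]; ring
          linarith [hlow]
        have h7 : c j < ℓ + ρ := by
          have : ℓ + ρ = 2 * ((i : ℝ) + 1) * ρ := by rw [hℓdef]; ring
          linarith [hhigh]
        constructor <;> linarith
      · have hsel : sel i = M := by simp only [hseldef]; exact dif_neg h
        rw [hsel]
        push_neg at h
        have hj : c j < ℓ := h j
        have hMlt : c M < ℓ := h M
        have hjM' : c j ≤ c M := hcmono hjM
        have h6 : c j ≥ ℓ - ρ := by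
          have : ℓ - ρ = 2 * (i : ℝ) * ρ := by rw [hℓdef]; ring
          linarith [hlow]
        rw [abs_le]
        constructor <;> linarith
    calc dist (p j) (p (sel i)) ≤ |c j - c (sel i)| := hchain' _ _
      _ ≤ ρ + ε := hbound
  -- the covering
  have hsub : Metric.thickening r (γ '' Set.Icc (0 : ℝ) 1) ⊆
      ⋃ i ∈ Finset.range N, Metric.ball (p (sel i)) (2 * r) := by
    intro x hx
    rw [Metric.mem_thickening_iff] at hx
    obtain ⟨z, ⟨t, ht, rfl⟩, hxz⟩ := hx
    set j : ℕ := ⌊t * M⌋₊ with hjdef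
    have hjM : j ≤ M := by
      rw [hjdef]
      have : t * M ≤ M := by nlinarith [ht.2, hMpos]
      calc ⌊t * M⌋₊ ≤ ⌊(M : ℝ)⌋₊ := Nat.floor_le_floor this
        _ = M := Nat.floor_natCast M
    have huj : u j = (j : ℝ) / M := by
      rw [hudef]
      have h1 : (j : ℝ) / M ≤ 1 := by
        rw [div_le_one hMpos]; exact_mod_cast Nat.cast_le.2 hjM
      simp [min_eq_left h1]
    have htuj : dist t (u j) < δ := by
      rw [Real.dist_eq, huj]
      have h1 : (j : ℝ) ≤ t * M := Nat.floor_le (by nlinarith [ht.1])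
      have h2 : t * M < (j : ℝ) + 1 := Nat.lt_floor_add_one (t * M)
      have h3 : (j : ℝ) / M ≤ t := by rw [div_le_iff₀ hMpos]; linarith
      have h4 : t - (j : ℝ) / M < 1 / M := by
        rw [sub_lt_iff_lt_add, ← add_div, lt_div_iff₀ hMpos]
        linarith
      rw [abs_of_nonneg (by linarith)]
      linarith
    have hγt : dist (γ t) (p j) < ε := hδ t ht (u j) (humem j) htuj
    obtain ⟨i, hiN, hdist⟩ := hcover j hjM
    refine Set.mem_biUnion (Finset.mem_range.2 hiN) ?_
    rw [Metric.mem_ball]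
    calc dist x (p (sel i)) ≤ dist x (γ t) + dist (γ t) (p j) + dist (p j) (p (sel i)) :=
      dist_triangle4 _ _ _ _
    _ < r + ε + (ρ + ε) := by
      apply add_lt_add_of_lt_of_le
      exact add_lt_add hxz hγt
      exact hdist
    _ = 2 * r := by rw [hρdef]; ring
  -- measure estimate
  have hmem : ∀ i, p (sel i) ∈ γ '' Set.Icc (0 : ℝ) 1 := fun i =>
    ⟨u (sel i), humem _, rfl⟩
  calc μH[2] (Metric.thickening r (γ '' Set.Icc (0 : ℝ) 1))
      ≤ μH[2] (⋃ i ∈ Finset.range N, Metric.ball (p (sel i)) (2 * r)) :=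
        measure_mono hsub
    _ ≤ ∑ i ∈ Finset.range N, μH[2] (Metric.ball (p (sel i)) (2 * r)) :=
        measure_biUnion_finset_le _ _
    _ ≤ ∑ _i ∈ Finset.range N, ENNReal.ofReal (4 * K * r ^ 2) :=
        Finset.sum_le_sum fun i _ => hball _ (hmem i)
    _ = (N : ENNReal) * ENNReal.ofReal (4 * K * r ^ 2) := by
        rw [Finset.sum_const, Finset.card_range, nsmul_eq_mul]
    _ = ENNReal.ofReal ((N : ℝ) * (4 * K * r ^ 2)) := by
        rw [ENNReal.ofReal_mul (Nat.cast_nonneg N), ENNReal.ofReal_natCast]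
    _ ≤ ENNReal.ofReal (2 * K * r * L + 8 * K * r ^ 2) := by
        apply ENNReal.ofReal_le_ofReal
        have hN : (N : ℝ) ≤ L / (2 * ρ) + 1 := by
          rw [hNdef]
          push_cast
          have := Nat.floor_le (by positivity : (0:ℝ) ≤ L / (2 * ρ))
          linarith
        have hkey : ε * (L + 2 * r) = r ^ 2 := by
          rw [hεdef]; field_simp
        have hkey2 : (L + 2 * r) * (2 * ρ) = 2 * r * L := by
          calc (L + 2 * r) * (2 * ρ) = 2 * r * (L + 2 * r) - 4 * (ε * (L + 2 * r)) := by
                rw [hρdef]; ring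
            _ = 2 * r * (L + 2 * r) - 4 * r ^ 2 := by rw [hkey]
            _ = 2 * r * L := by ring
        have hρbound : L / (2 * ρ) ≤ L / (2 * r) + 1 := by
          rw [div_add' _ _ _ (by linarith : (2:ℝ) * r ≠ 0), div_le_div_iff₀ (by linarith) (by linarith)]
          nlinarith [hkey2]
        have h1 : (N : ℝ) ≤ L / (2 * r) + 2 := by linarith
        have h2 : (N : ℝ) * (4 * K * r ^ 2) ≤ (L / (2 * r) + 2) * (4 * K * r ^ 2) := by
          apply mul_le_mul_of_nonneg_right h1 (by positivity)
        calc (N : ℝ) * (4 * K * r ^ 2) ≤ (L / (2 * r) + 2) * (4 * K * r ^ 2) := h2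
          _ = 2 * K * r * L + 8 * K * r ^ 2 := by field_simp; ring
end

section
/- Let X, Y be metric spaces and g : Y → X a continuous map. Suppose there exists L > 0 such that ℓ(g ∘ γ) ≤ L·ℓ(γ) for every injective rectifiable curve γ in Y. Then ℓ(g ∘ γ) ≤ L·ℓ(γ) for every rectifiable curve γ in Y. -/
open Set ENNReal

section Aux
variable {Y : Type*} [MetricSpace Y]

lemma my_lsc_min {β : Type*} [TopologicalSpace β] {S : Set β} (hS : IsCompact S)
    (hne : S.Nonempty) {Φ : β → ℝ≥0∞} (hΦ : LowerSemicontinuous Φ) :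
    ∃ f ∈ S, ∀ h ∈ S, Φ f ≤ Φ h := by
  by_contra hcon
  push_neg at hcon
  set m : ℝ≥0∞ := ⨅ f ∈ S, Φ f with hm
  have hlt : ∀ f ∈ S, m < Φ f := by
    intro f hf
    rcases lt_or_eq_of_le (iInf₂_le f hf : m ≤ Φ f) with h | h
    · exact h
    · obtain ⟨h', hh', hlt'⟩ := hcon f hf
      exact absurd (h ▸ iInf₂_le h' hh' : Φ f ≤ Φ h') (not_le.mpr hlt')
  -- choose intermediate values
  have hr : ∀ f ∈ S, ∃ r, m < r ∧ r < Φ f := fun f hf => exists_between (hlt f hf)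
  choose! r hr1 hr2 using hr
  -- open neighborhoods
  have hU : ∀ f ∈ S, {y | r f < Φ y} ∈ nhds f := by
    intro f hf
    exact hΦ f (r f) (hr2 f hf)
  obtain ⟨tf, htf⟩ := hS.elim_nhds_subcover' (fun f hf => {y | r f < Φ y}) hU
  -- tf : Finset ↥S
  have hne' : tf.Nonempty := by
    rcases hne with ⟨x, hx⟩
    rcases mem_iUnion₂.mp (htf hx) with ⟨i, hi, _⟩
    exact ⟨i, hi⟩
  obtain ⟨i0, hi0, hmin⟩ := tf.exists_min_image (fun i => r i.1) hne'
  have hlow : ∀ f ∈ S, r i0.1 ≤ Φ f := by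
    intro f hf
    rcases mem_iUnion₂.mp (htf hf) with ⟨i, hi, hfi⟩
    exact le_of_lt (lt_of_le_of_lt (hmin i hi) hfi)
  have : r i0.1 ≤ m := le_iInf₂ hlow
  exact absurd (lt_of_lt_of_le (hr1 i0.1 i0.2) this) (lt_irrefl m)

lemma my_evar_small_right {γ : ℝ → Y} {x t : ℝ} (hxt : x ≤ t)
    (hc : ContinuousWithinAt γ (Icc x t) x) (hfin : eVariationOn γ (Icc x t) ≠ ⊤)
    {ε : ℝ} (hε : 0 < ε) :
    ∃ δ > 0, ∀ y ∈ Icc x t, y - x < δ → eVariationOn γ (Icc x y) ≤ ENNReal.ofReal ε := by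
  set A := eVariationOn γ (Icc x t) with hA
  by_cases hAε : A ≤ ENNReal.ofReal ε
  · exact ⟨1, one_pos, fun y hy _ =>
      (eVariationOn.mono γ (Icc_subset_Icc_right hy.2)).trans hAε⟩
  push_neg at hAε
  have hApos : A ≠ 0 := by
    intro h0
    rw [h0] at hAε
    exact absurd hAε (not_lt.mpr zero_le)
  have hsub : A - ENNReal.ofReal (ε/2) < A :=
    ENNReal.sub_lt_self hfin hApos (by simp [ENNReal.ofReal_pos, half_pos hε])
  -- extract a partition almost attaining A
  rw [hA, eVariationOn, lt_iSup_iff] at hsub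
  obtain ⟨⟨n, u, hu, us⟩, hS⟩ := hsub
  obtain ⟨η, hηpos, hηdef⟩ : ∃ η : ℝ, 0 < η ∧ η = ε / (8 * (n+1)) :=
    ⟨_, by positivity, rfl⟩
  -- continuity: get δ
  have hball : EMetric.ball (γ x) (ENNReal.ofReal η) ∈ nhds (γ x) :=
    EMetric.ball_mem_nhds _ (by simp [ENNReal.ofReal_pos, hηpos])
  have := hc hball
  rw [Filter.mem_map, Metric.mem_nhdsWithin_iff] at this
  obtain ⟨δ, hδpos, hδ⟩ := this
  refine ⟨δ, hδpos, fun y hy hyδ => ?_⟩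
  have hedist : ∀ z, x ≤ z → z ≤ y → edist (γ z) (γ x) < ENNReal.ofReal η := by
    intro z hz1 hz2
    have : z ∈ Metric.ball x δ ∩ Icc x t := by
      constructor
      · rw [Metric.mem_ball, Real.dist_eq, abs_of_nonneg (by linarith)]
        linarith
      · exact ⟨hz1, hz2.trans hy.2⟩
    exact hδ this
  -- the shifted partition
  set u' : ℕ → ℝ := fun i => max (u i) y with hu'
  have hu'mono : Monotone u' := fun i j hij => max_le_max (hu hij) le_rfl
  have hu'mem : ∀ i, u' i ∈ Icc y t := fun i => ⟨le_max_right _ _,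
    max_le (us i).2 hy.2⟩
  have he : ∀ j, edist (γ (u j)) (γ (u' j)) ≤ ENNReal.ofReal (2*η) := by
    intro j
    rcases le_or_gt y (u j) with h | h
    · have h1 : u' j = u j := sup_eq_left.mpr h
      rw [h1, edist_self]
      simp
    · have h1 : u' j = y := sup_eq_right.mpr h.le
      rw [h1]
      calc edist (γ (u j)) (γ y) ≤ edist (γ (u j)) (γ x) + edist (γ x) (γ y) :=
            edist_triangle _ _ _
        _ ≤ ENNReal.ofReal η + ENNReal.ofReal η :=
            add_le_add (hedist _ (us j).1 h.le).le
              (by rw [edist_comm]; exact (hedist y hy.1 le_rfl).le)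
        _ = ENNReal.ofReal (2*η) := by
            rw [← ENNReal.ofReal_add hηpos.le hηpos.le]; ring_nf
  have hterm : ∀ i, edist (γ (u (i+1))) (γ (u i)) ≤
      ENNReal.ofReal (2*η) + edist (γ (u' (i+1))) (γ (u' i)) + ENNReal.ofReal (2*η) := by
    intro i
    calc edist (γ (u (i+1))) (γ (u i))
        ≤ edist (γ (u (i+1))) (γ (u' (i+1))) + edist (γ (u' (i+1))) (γ (u' i))
            + edist (γ (u' i)) (γ (u i)) := by
          exact (edist_triangle4 _ _ _ _)
      _ ≤ ENNReal.ofReal (2*η) + edist (γ (u' (i+1))) (γ (u' i)) + ENNReal.ofReal (2*η) := by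
          gcongr
          · exact he (i+1)
          · rw [edist_comm]; exact he i
  have hsum : (∑ i ∈ Finset.range n, edist (γ (u (i+1))) (γ (u i))) ≤
      eVariationOn γ (Icc y t) + ENNReal.ofReal (ε/2) := by
    calc (∑ i ∈ Finset.range n, edist (γ (u (i+1))) (γ (u i)))
        ≤ ∑ i ∈ Finset.range n, (ENNReal.ofReal (2*η) + edist (γ (u' (i+1))) (γ (u' i))
            + ENNReal.ofReal (2*η)) := Finset.sum_le_sum fun i _ => hterm i
      _ = (∑ i ∈ Finset.range n, edist (γ (u' (i+1))) (γ (u' i)))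
            + (n : ℝ≥0∞) * ENNReal.ofReal (4*η) := by
          rw [Finset.sum_add_distrib, Finset.sum_add_distrib]
          simp only [Finset.sum_const, Finset.card_range, nsmul_eq_mul]
          have h4 : ENNReal.ofReal (4*η) = ENNReal.ofReal (2*η) + ENNReal.ofReal (2*η) := by
            rw [← ENNReal.ofReal_add (by positivity) (by positivity)]
            ring_nf
          rw [h4, mul_add]
          ring
      _ ≤ eVariationOn γ (Icc y t) + ENNReal.ofReal (ε/2) := by
          gcongr
          · exact eVariationOn.sum_le (f := γ) (n := n) hu'mono hu'mem
          · rw [← ENNReal.ofReal_natCast, ← ENNReal.ofReal_mul (by positivity)]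
            apply ENNReal.ofReal_le_ofReal
            rw [hηdef]
            have hn : (0:ℝ) ≤ (n:ℝ) := Nat.cast_nonneg n
            have hd : (0:ℝ) < 8 * ((n:ℝ)+1) := by positivity
            rw [show (n:ℝ) * (4 * (ε / (8 * ((n:ℝ)+1)))) = ε * ((n:ℝ) / (2*((n:ℝ)+1))) by
              field_simp; ring]
            calc ε * ((n:ℝ) / (2*((n:ℝ)+1))) ≤ ε * (1/2) := by
                  apply mul_le_mul_of_nonneg_left _ hε.le
                  rw [div_le_div_iff₀ (by positivity) (by norm_num)]
                  nlinarith
              _ = ε / 2 := by ring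
  -- conclude
  have hlt : A < eVariationOn γ (Icc y t) + ENNReal.ofReal ε := by
    have h1 : A - ENNReal.ofReal (ε/2) < eVariationOn γ (Icc y t) + ENNReal.ofReal (ε/2) :=
      lt_of_lt_of_le hS hsum
    have h2 : A < eVariationOn γ (Icc y t) + ENNReal.ofReal (ε/2) + ENNReal.ofReal (ε/2) := by
      rcases le_or_gt A (ENNReal.ofReal (ε/2)) with h | h
      · calc A ≤ ENNReal.ofReal (ε/2) := h
          _ < ENNReal.ofReal (ε/2) + ENNReal.ofReal (ε/2) :=
              ENNReal.lt_add_right ENNReal.ofReal_ne_top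
                (ENNReal.ofReal_pos.mpr (half_pos hε)).ne'
          _ ≤ eVariationOn γ (Icc y t) + ENNReal.ofReal (ε/2) + ENNReal.ofReal (ε/2) := by
              rw [add_assoc]
              exact le_add_self
      · exact (ENNReal.sub_lt_iff_lt_right ENNReal.ofReal_ne_top h.le).mp h1
    calc A < eVariationOn γ (Icc y t) + ENNReal.ofReal (ε/2) + ENNReal.ofReal (ε/2) := h2
      _ = eVariationOn γ (Icc y t) + ENNReal.ofReal ε := by
        rw [add_assoc, ← ENNReal.ofReal_add (by positivity) (by positivity)]
        norm_num
  have hdecomp : eVariationOn γ (Icc x y) + eVariationOn γ (Icc y t) = A := by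
    have := eVariationOn.Icc_add_Icc (s := Icc x t) γ hy.1 hy.2 hy
    rw [inter_eq_self_of_subset_right (Icc_subset_Icc_right hy.2),
      inter_eq_self_of_subset_right (Icc_subset_Icc_left hy.1), inter_self] at this
    exact this
  have hyt_ne : eVariationOn γ (Icc y t) ≠ ⊤ :=
    (lt_of_le_of_lt (eVariationOn.mono γ (Icc_subset_Icc_left hy.1)) hfin.lt_top).ne
  have : eVariationOn γ (Icc x y) + eVariationOn γ (Icc y t)
      < ENNReal.ofReal ε + eVariationOn γ (Icc y t) := by
    rw [hdecomp]
    rw [add_comm (eVariationOn γ (Icc y t)) (ENNReal.ofReal ε)] at hlt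
    exact hlt
  exact le_of_lt ((ENNReal.add_lt_add_iff_right hyt_ne).mp this)

lemma my_evar_small_left {γ : ℝ → Y} {s x : ℝ} (hsx : s ≤ x)
    (hc : ContinuousWithinAt γ (Icc s x) x) (hfin : eVariationOn γ (Icc s x) ≠ ⊤)
    {ε : ℝ} (hε : 0 < ε) :
    ∃ δ > 0, ∀ y ∈ Icc s x, x - y < δ → eVariationOn γ (Icc y x) ≤ ENNReal.ofReal ε := by
  have hneg : ∀ a b : ℝ, a ≤ b → eVariationOn (γ ∘ Neg.neg) (Icc (-b) (-a)) =
      eVariationOn γ (Icc a b) := by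
    intro a b _
    rw [eVariationOn.comp_eq_of_antitoneOn γ Neg.neg
      (fun u _ v _ huv => by simpa using huv : AntitoneOn Neg.neg (Icc (-b) (-a)))]
    congr 1
    rw [show (Neg.neg '' Icc (-b) (-a) : Set ℝ) = Icc a b by
      ext z; simp [neg_le, le_neg, and_comm]]
  have hc' : ContinuousWithinAt (γ ∘ Neg.neg) (Icc (-x) (-s)) (-x) := by
    have : ContinuousWithinAt Neg.neg (Icc (-x) (-s)) (-x) :=
      continuous_neg.continuousWithinAt
    apply ContinuousWithinAt.comp (by simpa using hc) this
    intro z hz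
    simp only [mem_Icc] at hz ⊢
    constructor <;> linarith [hz.1, hz.2]
  have hfin' : eVariationOn (γ ∘ Neg.neg) (Icc (-x) (-s)) ≠ ⊤ := by
    rw [hneg s x hsx]; exact hfin
  obtain ⟨δ, hδpos, hδ⟩ := my_evar_small_right (by linarith : -x ≤ -s) hc' hfin' hε
  refine ⟨δ, hδpos, fun y hy hyδ => ?_⟩
  have := hδ (-y) (by simp only [mem_Icc]; constructor <;> linarith [hy.1, hy.2])
    (by linarith)
  rwa [hneg y x hy.2] at this

lemma my_continuousOn_vf {γ : ℝ → Y} {s t : ℝ} (hst : s ≤ t)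
    (hγ : ContinuousOn γ (Icc s t)) (hfin : eVariationOn γ (Icc s t) ≠ ⊤) :
    ContinuousOn (variationOnFromTo γ (Icc s t) s) (Icc s t) := by
  have hlbv : LocallyBoundedVariationOn γ (Icc s t) :=
    BoundedVariationOn.locallyBoundedVariationOn hfin
  intro x hx
  rw [Metric.continuousWithinAt_iff]
  intro ε hε
  -- right smallness on [x, t]
  obtain ⟨δ1, hδ1pos, hδ1⟩ := my_evar_small_right hx.2
    ((hγ x hx).mono (Icc_subset_Icc hx.1 le_rfl))
    ((eVariationOn.mono γ (Icc_subset_Icc hx.1 le_rfl)).trans_lt hfin.lt_top).ne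
    (half_pos hε)
  obtain ⟨δ2, hδ2pos, hδ2⟩ := my_evar_small_left hx.1
    ((hγ x hx).mono (Icc_subset_Icc le_rfl hx.2))
    ((eVariationOn.mono γ (Icc_subset_Icc le_rfl hx.2)).trans_lt hfin.lt_top).ne
    (half_pos hε)
  refine ⟨min δ1 δ2, lt_min hδ1pos hδ2pos, fun y hy hyx => ?_⟩
  have hvar : ∀ a b : ℝ, s ≤ a → a ≤ b → b ≤ t →
      variationOnFromTo γ (Icc s t) a b = (eVariationOn γ (Icc a b)).toReal := by
    intro a b hsa hab hbt
    rw [variationOnFromTo.eq_of_le γ _ hab,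
      inter_eq_self_of_subset_right (Icc_subset_Icc hsa hbt)]
  have hadd : ∀ a b : ℝ, s ≤ a → a ≤ b → b ≤ t →
      variationOnFromTo γ (Icc s t) s b - variationOnFromTo γ (Icc s t) s a
        = (eVariationOn γ (Icc a b)).toReal := by
    intro a b hsa hab hbt
    rw [← hvar a b hsa hab hbt,
      ← variationOnFromTo.add hlbv (⟨le_rfl, hst⟩ : s ∈ Icc s t)
        (⟨hsa, hab.trans hbt⟩ : a ∈ Icc s t) (⟨hsa.trans hab, hbt⟩ : b ∈ Icc s t)]
    ring
  rw [Real.dist_eq]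
  rcases le_total x y with h | h
  · have habs : variationOnFromTo γ (Icc s t) s y - variationOnFromTo γ (Icc s t) s x
        = (eVariationOn γ (Icc x y)).toReal := hadd x y hx.1 h hy.2
    rw [abs_of_nonneg (by rw [habs]; exact ENNReal.toReal_nonneg), habs]
    have hvy : eVariationOn γ (Icc x y) ≤ ENNReal.ofReal (ε/2) := by
      apply hδ1 y ⟨h, hy.2⟩
      have : |y - x| < min δ1 δ2 := by rwa [Real.dist_eq] at hyx
      calc y - x ≤ |y - x| := le_abs_self _
        _ < min δ1 δ2 := this
        _ ≤ δ1 := min_le_left _ _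
    calc (eVariationOn γ (Icc x y)).toReal ≤ ε/2 :=
          ENNReal.toReal_le_of_le_ofReal (by positivity) hvy
      _ < ε := by linarith
  · have habs : variationOnFromTo γ (Icc s t) s x - variationOnFromTo γ (Icc s t) s y
        = (eVariationOn γ (Icc y x)).toReal := hadd y x hy.1 h hx.2
    rw [abs_sub_comm, abs_of_nonneg (by rw [habs]; exact ENNReal.toReal_nonneg), habs]
    have hvy : eVariationOn γ (Icc y x) ≤ ENNReal.ofReal (ε/2) := by
      apply hδ2 y ⟨hy.1, h⟩
      have : |y - x| < min δ1 δ2 := by rwa [Real.dist_eq] at hyx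
      calc x - y ≤ |y - x| := by rw [abs_sub_comm]; exact le_abs_self _
        _ < min δ1 δ2 := this
        _ ≤ δ2 := min_le_right _ _
    calc (eVariationOn γ (Icc y x)).toReal ≤ ε/2 :=
          ENNReal.toReal_le_of_le_ofReal (by positivity) hvy
      _ < ε := by linarith

lemma my_exists_unit_speed {γ : ℝ → Y} {s t : ℝ} (hst : s ≤ t)
    (hγ : ContinuousOn γ (Icc s t)) (hfin : eVariationOn γ (Icc s t) ≠ ⊤) :
    ∃ c : ℝ → Y,
      (∀ u v : ℝ, 0 ≤ u → u ≤ v → v ≤ (eVariationOn γ (Icc s t)).toReal →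
        eVariationOn c (Icc u v) = ENNReal.ofReal (v - u)) ∧
      c 0 = γ s ∧ c (eVariationOn γ (Icc s t)).toReal = γ t ∧
      ∀ u ∈ Icc (0:ℝ) (eVariationOn γ (Icc s t)).toReal, c u ∈ γ '' Icc s t := by
  set V := (eVariationOn γ (Icc s t)).toReal with hV
  set vf := variationOnFromTo γ (Icc s t) s with hvf
  have hsmem : s ∈ Icc s t := ⟨le_rfl, hst⟩
  have htmem : t ∈ Icc s t := ⟨hst, le_rfl⟩
  have hlbv : LocallyBoundedVariationOn γ (Icc s t) :=
    BoundedVariationOn.locallyBoundedVariationOn hfin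
  have hvmono : MonotoneOn vf (Icc s t) := variationOnFromTo.monotoneOn hlbv hsmem
  have hvs : vf s = 0 := variationOnFromTo.self γ _ s
  have hvt : vf t = V := by
    rw [hvf, variationOnFromTo.eq_of_le γ _ hst, inter_self]
  have hvrange : ∀ z ∈ Icc s t, vf z ∈ Icc (0:ℝ) V := by
    intro z hz
    exact ⟨variationOnFromTo.nonneg_of_le γ _ hz.1,
      by rw [← hvt]; exact hvmono hz htmem hz.2⟩
  have hsurj : Icc (0:ℝ) V ⊆ vf '' Icc s t := by
    have h2 : Icc (vf s) (vf t) ⊆ vf '' Icc s t :=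
      intermediate_value_Icc hst (my_continuousOn_vf hst hγ hfin)
    rwa [hvs, hvt] at h2
  -- choice of inverse
  have hchoice : ∀ u : ℝ, ∃ z : ℝ, z ∈ Icc s t ∧ (u ∈ Icc (0:ℝ) V → vf z = u) := by
    intro u
    by_cases h : u ∈ Icc (0:ℝ) V
    · obtain ⟨z, hz1, hz2⟩ := hsurj h
      exact ⟨z, hz1, fun _ => hz2⟩
    · exact ⟨s, hsmem, fun h' => absurd h' h⟩
  choose x hx1 hx2 using hchoice
  set c : ℝ → Y := fun u => γ (x u) with hc
  have hxv : ∀ u ∈ Icc (0:ℝ) V, vf (x u) = u := fun u hu => hx2 u hu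
  have hkey : ∀ z ∈ Icc s t, c (vf z) = γ z := by
    intro z hz
    have hm := hvrange z hz
    have hxm := hx1 (vf z)
    have hxveq := hxv _ hm
    have hzero : variationOnFromTo γ (Icc s t) (x (vf z)) z = 0 := by
      have := variationOnFromTo.add hlbv hsmem hxm hz
      rw [show variationOnFromTo γ (Icc s t) s (x (vf z)) = vf (x (vf z)) from rfl,
        hxveq] at this
      linarith
    exact edist_eq_zero.mp (variationOnFromTo.edist_zero_of_eq_zero hlbv (hx1 _) hz hzero)
  have hxmono : MonotoneOn x (Icc (0:ℝ) V) := by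
    intro u hu v hv huv
    rcases eq_or_lt_of_le huv with rfl | hlt
    · exact le_rfl
    by_contra hcon
    push_neg at hcon
    have := hvmono (hx1 v) (hx1 u) hcon.le
    rw [hxv u hu, hxv v hv] at this
    exact absurd (hlt.trans_le this) (lt_irrefl u)
  refine ⟨c, ?_, ?_, ?_, ?_⟩
  · intro u v h0u huv hvV
    have humem : u ∈ Icc (0:ℝ) V := ⟨h0u, huv.trans hvV⟩
    have hvmem : v ∈ Icc (0:ℝ) V := ⟨h0u.trans huv, hvV⟩
    have hxuv : x u ≤ x v := hxmono humem hvmem huv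
    -- the variation of γ between x u and x v equals v - u
    have hmid : eVariationOn γ (Icc s t ∩ Icc (x u) (x v)) = ENNReal.ofReal (v - u) := by
      have hne : eVariationOn γ (Icc s t ∩ Icc (x u) (x v)) ≠ ⊤ :=
        ((eVariationOn.mono γ inter_subset_left).trans_lt hfin.lt_top).ne
      have htv : (eVariationOn γ (Icc s t ∩ Icc (x u) (x v))).toReal = v - u := by
        rw [← variationOnFromTo.eq_of_le γ _ hxuv]
        have := variationOnFromTo.add hlbv hsmem (hx1 u) (hx1 v)
        rw [show variationOnFromTo γ (Icc s t) s (x u) = vf (x u) from rfl,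
          show variationOnFromTo γ (Icc s t) s (x v) = vf (x v) from rfl,
          hxv u humem, hxv v hvmem] at this
        linarith
      rw [← htv, ENNReal.ofReal_toReal hne]
    apply le_antisymm
    · -- upper bound via monotone composition
      have hcomp : eVariationOn c (Icc u v) ≤
          eVariationOn γ (Icc s t ∩ Icc (x u) (x v)) := by
        apply eVariationOn.comp_le_of_monotoneOn γ x
          (hxmono.mono (Icc_subset_Icc h0u hvV))
        intro z hz
        have hzmem : z ∈ Icc (0:ℝ) V := ⟨h0u.trans hz.1, hz.2.trans hvV⟩
        exact ⟨hx1 z, hxmono humem hzmem hz.1, hxmono hzmem hvmem hz.2⟩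
      rwa [hmid] at hcomp
    · rw [← hmid, eVariationOn]
      apply iSup_le
      rintro ⟨n, z, hz, zs⟩
      have heq : ∀ i : ℕ, γ (z i) = c (vf (z i)) := fun i => (hkey _ (zs i).1).symm
      calc ∑ i ∈ Finset.range n, edist (γ (z (i+1))) (γ (z i))
          = ∑ i ∈ Finset.range n, edist (c (vf (z (i+1)))) (c (vf (z i))) := by
            apply Finset.sum_congr rfl
            intro i _
            rw [← heq, ← heq]
        _ ≤ eVariationOn c (Icc u v) := by
            refine eVariationOn.sum_le (f := c) (n := n) (u := fun i => vf (z i))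
              (fun i j hij => hvmono (zs i).1 (zs j).1 (hz hij)) ?_
            · intro i
              constructor
              · rw [← hxv u humem]
                exact hvmono (hx1 u) (zs i).1 (zs i).2.1
              · rw [← hxv v hvmem]
                exact hvmono (zs i).1 (hx1 v) (zs i).2.2
  · rw [hc, show (0:ℝ) = vf s from hvs.symm]
    exact hkey s hsmem
  · rw [hc, show V = vf t from hvt.symm]
    exact hkey t htmem
  · exact fun u hu => ⟨x u, hx1 u, rfl⟩

lemma my_key {X : Type*} [MetricSpace X] (g : Y → X) (L : ℝ)
    (harc : ∀ (a b : ℝ), a ≤ b → ∀ γ : ℝ → Y, ContinuousOn γ (Set.Icc a b) →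
      Set.InjOn γ (Set.Icc a b) → eVariationOn γ (Set.Icc a b) < ⊤ →
      eVariationOn (g ∘ γ) (Set.Icc a b) ≤
        ENNReal.ofReal L * eVariationOn γ (Set.Icc a b))
    {γ : ℝ → Y} {s t : ℝ} (hst : s ≤ t) (hγ : ContinuousOn γ (Icc s t))
    (hfin : eVariationOn γ (Icc s t) ≠ ⊤) :
    edist (g (γ s)) (g (γ t)) ≤ ENNReal.ofReal L * eVariationOn γ (Icc s t) := by
  set V := (eVariationOn γ (Icc s t)).toReal with hV
  have hV0 : (0:ℝ) ≤ V := ENNReal.toReal_nonneg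
  obtain ⟨c0, hc0unit, hc00, hc0V, hc0im⟩ := my_exists_unit_speed hst hγ hfin
  set K := γ '' Icc s t with hK
  have hKcomp : IsCompact K := isCompact_Icc.image_of_continuousOn hγ
  haveI : CompactSpace ↥K := isCompact_iff_compactSpace.mp hKcomp
  have h0mem : (0:ℝ) ∈ Icc (0:ℝ) V := ⟨le_rfl, hV0⟩
  have hVmem : V ∈ Icc (0:ℝ) V := ⟨hV0, le_rfl⟩
  -- the functional
  set Φ : (↥(Icc (0:ℝ) V) → ↥K) → ℝ≥0∞ :=
    fun f => eVariationOn (fun i => (f i : Y)) univ with hΦ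
  -- conversion
  have hconv : ∀ F : ℝ → Y,
      eVariationOn (F ∘ (Subtype.val : ↥(Icc (0:ℝ) V) → ℝ)) univ
        = eVariationOn F (Icc (0:ℝ) V) := by
    intro F
    rw [eVariationOn.comp_eq_of_monotoneOn F Subtype.val
      (fun a _ b _ hab => Subtype.coe_le_coe.mpr hab), image_univ, Subtype.range_coe]
  have hconv' : ∀ f : ↥(Icc (0:ℝ) V) → ↥K,
      Φ f = eVariationOn (fun z : ℝ => (f (projIcc 0 V hV0 z) : Y)) (Icc (0:ℝ) V) := by
    intro f
    rw [← hconv (fun z : ℝ => (f (projIcc 0 V hV0 z) : Y))]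
    apply eVariationOn.eq_of_eqOn
    intro i _
    simp only [Function.comp_apply, projIcc_val]
  -- the admissible set
  set S : Set (↥(Icc (0:ℝ) V) → ↥K) :=
    {f | (∀ i j : ↥(Icc (0:ℝ) V), (i:ℝ) ≤ (j:ℝ) →
          edist (f i : Y) (f j : Y) ≤ ENNReal.ofReal ((j:ℝ) - (i:ℝ))) ∧
        (f ⟨0, h0mem⟩ : Y) = γ s ∧ (f ⟨V, hVmem⟩ : Y) = γ t} with hS
  -- c0 packaged is in S
  have hc0lip : ∀ z1 z2 : ℝ, 0 ≤ z1 → z1 ≤ z2 → z2 ≤ V →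
      edist (c0 z1) (c0 z2) ≤ ENNReal.ofReal (z2 - z1) := by
    intro z1 z2 h0 h12 h2V
    calc edist (c0 z1) (c0 z2) ≤ eVariationOn c0 (Icc z1 z2) :=
          eVariationOn.edist_le c0 ⟨le_rfl, h12⟩ ⟨h12, le_rfl⟩
      _ = ENNReal.ofReal (z2 - z1) := hc0unit z1 z2 h0 h12 h2V
  set c0p : ↥(Icc (0:ℝ) V) → ↥K := fun i => ⟨c0 i, hc0im i i.2⟩ with hc0p
  have hc0pS : c0p ∈ S := by
    refine ⟨fun i j hij => hc0lip i j i.2.1 hij j.2.2, ?_, ?_⟩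
    · simpa using hc00
    · simpa using hc0V
  have hSne : S.Nonempty := ⟨c0p, hc0pS⟩
  -- S is compact
  have hSclosed : IsClosed S := by
    have hSeq : S = (⋂ (i : ↥(Icc (0:ℝ) V)) (j : ↥(Icc (0:ℝ) V)),
          {f : ↥(Icc (0:ℝ) V) → ↥K | (i:ℝ) ≤ (j:ℝ) →
            edist (f i : Y) (f j : Y) ≤ ENNReal.ofReal ((j:ℝ) - (i:ℝ))}) ∩
        ({f : ↥(Icc (0:ℝ) V) → ↥K | (f ⟨0, h0mem⟩ : Y) = γ s} ∩
         {f : ↥(Icc (0:ℝ) V) → ↥K | (f ⟨V, hVmem⟩ : Y) = γ t}) := by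
      ext f
      simp only [hS, mem_setOf_eq, mem_inter_iff, mem_iInter]
    rw [hSeq]
    apply IsClosed.inter
    · refine isClosed_iInter fun i => isClosed_iInter fun j => ?_
      by_cases hij : (i:ℝ) ≤ (j:ℝ)
      · simp only [hij, forall_true_left]
        exact isClosed_le (Continuous.edist
          (continuous_subtype_val.comp (continuous_apply i))
          (continuous_subtype_val.comp (continuous_apply j))) continuous_const
      · simp only [hij, false_implies, setOf_true]
        exact isClosed_univ
    · apply IsClosed.inter
      · exact isClosed_eq (continuous_subtype_val.comp (continuous_apply _)) continuous_const
      · exact isClosed_eq (continuous_subtype_val.comp (continuous_apply _)) continuous_const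
  have hScomp : IsCompact S := hSclosed.isCompact
  -- Φ is lower semicontinuous
  have hΦlsc : LowerSemicontinuous Φ := by
    exact lowerSemicontinuous_iSup (f := fun (pp : ℕ ×
        {u : ℕ → ↥(Icc (0:ℝ) V) // Monotone u ∧ ∀ i, u i ∈ (univ : Set ↥(Icc (0:ℝ) V))})
        (f : ↥(Icc (0:ℝ) V) → ↥K) =>
        ∑ i ∈ Finset.range pp.1, edist ((f (pp.2.1 (i+1))) : Y) ((f (pp.2.1 i)) : Y))
      (fun pp => Continuous.lowerSemicontinuous (continuous_finset_sum _ fun i _ =>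
        Continuous.edist (continuous_subtype_val.comp (continuous_apply _))
          (continuous_subtype_val.comp (continuous_apply _))))
  obtain ⟨fm, hfmS, hfmmin⟩ := my_lsc_min hScomp hSne hΦlsc
  -- Φ of c0p equals ofReal V
  have hΦc0p : Φ c0p = ENNReal.ofReal V := by
    rw [hconv' c0p]
    have : EqOn (fun z : ℝ => (c0p (projIcc 0 V hV0 z) : Y)) c0 (Icc (0:ℝ) V) := by
      intro z hz
      simp only [hc0p, projIcc_of_mem hV0 hz]
    rw [eVariationOn.eq_of_eqOn this, hc0unit 0 V le_rfl hV0 le_rfl, sub_zero]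
  have hΦfm_le : Φ fm ≤ ENNReal.ofReal V := (hfmmin c0p hc0pS).trans_eq hΦc0p
  have hΦfm_ne : Φ fm ≠ ⊤ := (hΦfm_le.trans_lt ENNReal.ofReal_lt_top).ne
  -- the extension F of the minimizer
  set F : ℝ → Y := fun z => (fm (projIcc 0 V hV0 z) : Y) with hF
  have hFvar : eVariationOn F (Icc (0:ℝ) V) = Φ fm := (hconv' fm).symm
  have hFfin : eVariationOn F (Icc (0:ℝ) V) ≠ ⊤ := by rw [hFvar]; exact hΦfm_ne
  have hFlip : ∀ z1 z2 : ℝ, 0 ≤ z1 → z1 ≤ z2 → z2 ≤ V →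
      edist (F z1) (F z2) ≤ ENNReal.ofReal (z2 - z1) := by
    intro z1 z2 h0 h12 h2V
    have h1m : z1 ∈ Icc (0:ℝ) V := ⟨h0, h12.trans h2V⟩
    have h2m : z2 ∈ Icc (0:ℝ) V := ⟨h0.trans h12, h2V⟩
    rw [hF]
    dsimp only
    rw [projIcc_of_mem hV0 h1m, projIcc_of_mem hV0 h2m]
    simpa using hfmS.1 ⟨z1, h1m⟩ ⟨z2, h2m⟩ h12
  have hFcont : ContinuousOn F (Icc (0:ℝ) V) := by
    apply LipschitzOnWith.continuousOn (K := 1)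
    intro z1 h1 z2 h2
    rw [ENNReal.coe_one, one_mul, edist_dist z1 z2, Real.dist_eq]
    rcases le_total z1 z2 with h | h
    · rw [abs_of_nonpos (by linarith), neg_sub]
      exact hFlip z1 z2 h1.1 h h2.2
    · rw [abs_of_nonneg (by linarith)]
      rw [edist_comm]
      exact hFlip z2 z1 h2.1 h h1.2
  have hF0 : F 0 = γ s := by
    rw [hF]
    simp only [projIcc_of_mem hV0 h0mem]
    exact hfmS.2.1
  have hFV : F V = γ t := by
    rw [hF]
    simp only [projIcc_of_mem hV0 hVmem]
    exact hfmS.2.2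
  have hFim : ∀ z : ℝ, F z ∈ K := fun z => (fm (projIcc 0 V hV0 z)).2
  -- reparametrize F by arc length
  obtain ⟨c1, hc1unit, hc10, hc1l, hc1im⟩ := my_exists_unit_speed hV0 hFcont hFfin
  set l := (eVariationOn F (Icc (0:ℝ) V)).toReal with hl
  have hofl : ENNReal.ofReal l = Φ fm := by rw [hl, ENNReal.ofReal_toReal hFfin, hFvar]
  have hlV : l ≤ V := by
    rw [hl, hFvar]
    calc (Φ fm).toReal ≤ (ENNReal.ofReal V).toReal :=
          ENNReal.toReal_mono ENNReal.ofReal_ne_top hΦfm_le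
      _ = V := ENNReal.toReal_ofReal hV0
  have hl0 : (0:ℝ) ≤ l := ENNReal.toReal_nonneg
  have hc1lip : ∀ z1 z2 : ℝ, 0 ≤ z1 → z1 ≤ z2 → z2 ≤ l →
      edist (c1 z1) (c1 z2) ≤ ENNReal.ofReal (z2 - z1) := by
    intro z1 z2 h0 h12 h2l
    calc edist (c1 z1) (c1 z2) ≤ eVariationOn c1 (Icc z1 z2) :=
          eVariationOn.edist_le c1 ⟨le_rfl, h12⟩ ⟨h12, le_rfl⟩
      _ = ENNReal.ofReal (z2 - z1) := hc1unit z1 z2 h0 h12 h2l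
  -- main case of injectivity
  have hmain : ∀ a b : ℝ, a ∈ Icc (0:ℝ) l → b ∈ Icc (0:ℝ) l → a < b → c1 a ≠ c1 b := by
    intro a b ha hb hab hcab
    have hbl : b ≤ l := hb.2
    have ha0 : 0 ≤ a := ha.1
    have hal : a ≤ l := ha.2
    have hlpos : 0 < l := lt_of_le_of_lt ha0 (hab.trans_le hbl)
    set d := b - a with hd
    have hdpos : 0 < d := by rw [hd]; linarith
    set ψ : ℝ → ℝ := fun z => if z ≤ a then z else min (z + d) l with hψ
    set h : ℝ → Y := fun z => c1 (ψ z) with hh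
    have hψmem : ∀ z ∈ Icc (0:ℝ) V, ψ z ∈ Icc (0:ℝ) l := by
      intro z hz
      rw [hψ]
      dsimp only
      split_ifs with h'
      · exact ⟨hz.1, h'.trans hal⟩
      · push_neg at h'
        constructor
        · exact le_min (by linarith [hz.1, hdpos.le]) hl0
        · exact min_le_right _ _
    -- h is 1-Lipschitz on [0, V]
    have hhlip : ∀ z1 z2 : ℝ, 0 ≤ z1 → z1 ≤ z2 → z2 ≤ V →
        edist (h z1) (h z2) ≤ ENNReal.ofReal (z2 - z1) := by
      intro z1 z2 h0 h12 h2V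
      rw [hh]
      dsimp only
      rw [hψ]
      dsimp only
      split_ifs with h1 h2 h2
      · exact hc1lip z1 z2 h0 h12 (h2.trans hal)
      · -- z1 ≤ a < z2
        push_neg at h2
        calc edist (c1 z1) (c1 (min (z2 + d) l))
            ≤ edist (c1 z1) (c1 a) + edist (c1 a) (c1 (min (z2 + d) l)) :=
              edist_triangle _ _ _
          _ = edist (c1 z1) (c1 a) + edist (c1 b) (c1 (min (z2 + d) l)) := by rw [hcab]
          _ ≤ ENNReal.ofReal (a - z1) + ENNReal.ofReal (min (z2 + d) l - b) := by
              gcongr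
              · exact hc1lip z1 a h0 h1 hal
              · exact hc1lip b (min (z2 + d) l) (by linarith)
                  (le_min (by linarith) hbl) (min_le_right _ _)
          _ = ENNReal.ofReal ((a - z1) + (min (z2 + d) l - b)) := by
              rw [ENNReal.ofReal_add (by linarith) (by
                have : b ≤ min (z2 + d) l := le_min (by linarith) hbl
                linarith)]
          _ ≤ ENNReal.ofReal (z2 - z1) := by
              apply ENNReal.ofReal_le_ofReal
              have : min (z2 + d) l ≤ z2 + d := min_le_left _ _
              linarith
      · -- a < z1 ≤ z2, but z2 ≤ a : contradiction
        push_neg at h1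
        linarith
      · -- a < z1, a < z2 : both on the shifted branch
        push_neg at h1 h2
        have hm1 : 0 ≤ min (z1 + d) l := le_min (by linarith) hl0
        have hm12 : min (z1 + d) l ≤ min (z2 + d) l :=
          min_le_min (by linarith) le_rfl
        have hm2 : min (z2 + d) l ≤ l := min_le_right _ _
        calc edist (c1 (min (z1 + d) l)) (c1 (min (z2 + d) l))
            ≤ ENNReal.ofReal (min (z2 + d) l - min (z1 + d) l) :=
              hc1lip _ _ hm1 hm12 hm2
          _ ≤ ENNReal.ofReal (z2 - z1) := by
              apply ENNReal.ofReal_le_ofReal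
              rcases le_total (z1 + d) l with h' | h' <;>
                rcases le_total (z2 + d) l with h'' | h'' <;>
                simp [min_eq_left, min_eq_right, h', h''] <;> linarith
    -- package h
    have hhim : ∀ i : ↥(Icc (0:ℝ) V), h i ∈ K := by
      intro i
      rw [hh]
      dsimp only
      obtain ⟨w, hw, hweq⟩ := hc1im (ψ i) (hψmem i i.2)
      rw [← hweq]
      exact hFim w
    set hp : ↥(Icc (0:ℝ) V) → ↥K := fun i => ⟨h i, hhim i⟩ with hhp
    have hψ0 : ψ 0 = 0 := by rw [hψ]; simp [ha0]
    have haV : a < V := lt_of_lt_of_le hab (hbl.trans hlV)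
    have hψV : ψ V = l := by
      rw [hψ]
      dsimp only
      rw [if_neg (not_le.mpr haV), min_eq_right (by linarith)]
    have hhpS : hp ∈ S := by
      refine ⟨fun i j hij => hhlip i j i.2.1 hij j.2.2, ?_, ?_⟩
      · show h (0:ℝ) = γ s
        rw [hh]
        dsimp only
        rw [hψ0, hc10, hF0]
      · show h V = γ t
        rw [hh]
        dsimp only
        rw [hψV, hc1l, hFV]
    -- compute the variation of h
    have hΦhp : Φ hp = eVariationOn h (Icc (0:ℝ) V) := by
      rw [hconv' hp]
      apply eVariationOn.eq_of_eqOn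
      intro z hz
      simp only [hhp, projIcc_of_mem hV0 hz]
    have hsplit : eVariationOn h (Icc (0:ℝ) a) + eVariationOn h (Icc a V)
        = eVariationOn h (Icc (0:ℝ) V) := by
      have := eVariationOn.Icc_add_Icc (s := (univ : Set ℝ)) h ha0 (hal.trans hlV)
        (mem_univ a)
      simpa [Set.univ_inter] using this
    have hpart1 : eVariationOn h (Icc (0:ℝ) a) = ENNReal.ofReal a := by
      have heqon : EqOn h c1 (Icc (0:ℝ) a) := by
        intro z hz
        rw [hh]
        dsimp only
        rw [hψ]
        dsimp only
        rw [if_pos hz.2]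
      rw [eVariationOn.eq_of_eqOn heqon, hc1unit 0 a le_rfl ha0 hal, sub_zero]
    have hpart2 : eVariationOn h (Icc a V) ≤ ENNReal.ofReal (l - b) := by
      have hmono : MonotoneOn ψ (Icc a V) := by
        intro z1 hz1 z2 hz2 h12
        rw [hψ]
        dsimp only
        split_ifs with h1 h2 h2
        · exact h12
        · push_neg at h2
          exact h1.trans (le_min (by linarith) hal)
        · push_neg at h1; linarith
        · exact min_le_min (by linarith) le_rfl
      have hmaps : MapsTo ψ (Icc a V) (insert a (Icc b l)) := by
        intro z hz
        rw [hψ]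
        dsimp only
        split_ifs with h1
        · have : z = a := le_antisymm h1 hz.1
          rw [this]; exact mem_insert _ _
        · push_neg at h1
          exact mem_insert_of_mem _ ⟨le_min (by linarith) (by linarith), min_le_right _ _⟩
      calc eVariationOn h (Icc a V) ≤ eVariationOn c1 (insert a (Icc b l)) :=
            eVariationOn.comp_le_of_monotoneOn c1 ψ hmono hmaps
        _ = eVariationOn (c1 ∘ (fun z => z ⊔ b)) (insert a (Icc b l)) := by
            apply eVariationOn.eq_of_eqOn
            intro z hz
            rcases hz with rfl | hz
            · show c1 z = c1 (z ⊔ b)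
              rw [sup_eq_right.mpr hab.le, hcab]
            · show c1 z = c1 (z ⊔ b)
              rw [sup_eq_left.mpr hz.1]
        _ ≤ eVariationOn c1 (Icc b l) := by
            apply eVariationOn.comp_le_of_monotoneOn c1 _
              (fun z1 _ z2 _ h12 => sup_le_sup h12 le_rfl)
            intro z hz
            rcases hz with rfl | hz
            · show z ⊔ b ∈ Icc b l
              rw [sup_eq_right.mpr hab.le]
              exact ⟨le_rfl, hbl⟩
            · show z ⊔ b ∈ Icc b l
              rw [sup_eq_left.mpr hz.1]
              exact hz
        _ = ENNReal.ofReal (l - b) := hc1unit b l (by linarith) hbl le_rfl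
    have hcontra : Φ hp < Φ fm := by
      calc Φ hp = eVariationOn h (Icc (0:ℝ) V) := hΦhp
        _ = eVariationOn h (Icc (0:ℝ) a) + eVariationOn h (Icc a V) := hsplit.symm
        _ ≤ ENNReal.ofReal a + ENNReal.ofReal (l - b) := by
            rw [hpart1]; gcongr
        _ = ENNReal.ofReal (a + (l - b)) := by
            rw [ENNReal.ofReal_add ha0 (by linarith)]
        _ < ENNReal.ofReal l := by
            rw [ENNReal.ofReal_lt_ofReal_iff hlpos]
            linarith
        _ = Φ fm := hofl
    exact absurd (hfmmin hp hhpS) (not_le.mpr hcontra)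
  -- injectivity
  have hinj : InjOn c1 (Icc (0:ℝ) l) := by
    intro a ha b hb hab
    rcases lt_trichotomy a b with h | h | h
    · exact absurd hab (hmain a b ha hb h)
    · exact h
    · exact absurd hab.symm (hmain b a hb ha h)
  -- apply the arc hypothesis
  have hc1cont : ContinuousOn c1 (Icc (0:ℝ) l) := by
    apply LipschitzOnWith.continuousOn (K := 1)
    intro z1 h1 z2 h2
    rw [ENNReal.coe_one, one_mul, edist_dist z1 z2, Real.dist_eq]
    rcases le_total z1 z2 with h | h
    · rw [abs_of_nonpos (by linarith), neg_sub]
      exact hc1lip z1 z2 h1.1 h h2.2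
    · rw [abs_of_nonneg (by linarith)]
      rw [edist_comm]
      exact hc1lip z2 z1 h2.1 h h1.2
  have hc1var : eVariationOn c1 (Icc (0:ℝ) l) = ENNReal.ofReal l := by
    rw [hc1unit 0 l le_rfl hl0 le_rfl, sub_zero]
  have harc' := harc 0 l hl0 c1 hc1cont hinj (by rw [hc1var]; exact ENNReal.ofReal_lt_top)
  have hept : edist (g (γ s)) (g (γ t)) ≤ eVariationOn (g ∘ c1) (Icc (0:ℝ) l) := by
    have h0' : γ s = c1 0 := by rw [hc10, hF0]
    have hl' : γ t = c1 l := by rw [hc1l, hFV]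
    rw [h0', hl']
    exact eVariationOn.edist_le (g ∘ c1) ⟨le_rfl, hl0⟩ ⟨hl0, le_rfl⟩
  calc edist (g (γ s)) (g (γ t)) ≤ eVariationOn (g ∘ c1) (Icc (0:ℝ) l) := hept
    _ ≤ ENNReal.ofReal L * eVariationOn c1 (Icc (0:ℝ) l) := harc'
    _ = ENNReal.ofReal L * ENNReal.ofReal l := by rw [hc1var]
    _ ≤ ENNReal.ofReal L * ENNReal.ofReal V := by
        rw [hofl]
        exact mul_le_mul_right hΦfm_le _
    _ = ENNReal.ofReal L * eVariationOn γ (Icc s t) := by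
        rw [hV, ENNReal.ofReal_toReal hfin]

end Aux

/-- If a continuous map `g` multiplies the length of every injective rectifiable
curve by at most `L`, then it does so for every rectifiable curve. -/
theorem length_bound_from_jordan_arcs {X Y : Type*} [MetricSpace X] [MetricSpace Y]
    (g : Y → X) (hg : Continuous g) (L : ℝ) (hL : 0 < L)
    (harc : ∀ (a b : ℝ), a ≤ b → ∀ γ : ℝ → Y, ContinuousOn γ (Set.Icc a b) →
      Set.InjOn γ (Set.Icc a b) → eVariationOn γ (Set.Icc a b) < ⊤ →
      eVariationOn (g ∘ γ) (Set.Icc a b) ≤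
        ENNReal.ofReal L * eVariationOn γ (Set.Icc a b)) :
    ∀ (a b : ℝ), a ≤ b → ∀ γ : ℝ → Y, ContinuousOn γ (Set.Icc a b) →
      eVariationOn γ (Set.Icc a b) < ⊤ →
      eVariationOn (g ∘ γ) (Set.Icc a b) ≤
        ENNReal.ofReal L * eVariationOn γ (Set.Icc a b) := by
  intro a b hab γ hγ hfin
  rw [eVariationOn]
  apply iSup_le
  rintro ⟨n, u, hu, us⟩
  have hseg : ∀ i : ℕ, eVariationOn γ (Icc (u i) (u (i+1))) ≠ ⊤ := fun i =>
    (lt_of_le_of_lt (eVariationOn.mono γ (Icc_subset_Icc (us i).1 (us (i+1)).2)) hfin).ne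
  have hstep : ∀ i : ℕ, edist ((g ∘ γ) (u (i+1))) ((g ∘ γ) (u i)) ≤
      ENNReal.ofReal L * eVariationOn γ (Icc (u i) (u (i+1))) := by
    intro i
    rw [edist_comm]
    exact my_key g L harc (hu (Nat.le_succ i))
      (hγ.mono (Icc_subset_Icc (us i).1 (us (i+1)).2)) (hseg i)
  calc ∑ i ∈ Finset.range n, edist ((g ∘ γ) (u (i+1))) ((g ∘ γ) (u i))
      ≤ ∑ i ∈ Finset.range n, ENNReal.ofReal L * eVariationOn γ (Icc (u i) (u (i+1))) :=
        Finset.sum_le_sum fun i _ => hstep i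
    _ = ENNReal.ofReal L * ∑ i ∈ Finset.range n, eVariationOn γ (Icc (u i) (u (i+1))) := by
        rw [Finset.mul_sum]
    _ ≤ ENNReal.ofReal L * eVariationOn γ (Icc a b) := by
        gcongr
        have hsum : ∀ m : ℕ, ∑ i ∈ Finset.range m, eVariationOn γ (Icc (u i) (u (i+1))) =
            eVariationOn γ (Icc (u 0) (u m)) := by
          intro m
          induction m with
          | zero =>
            rw [Finset.range_zero, Finset.sum_empty, Set.Icc_self,
              eVariationOn.subsingleton γ Set.subsingleton_singleton]
          | succ m ih =>
            rw [Finset.sum_range_succ, ih]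
            have := eVariationOn.Icc_add_Icc (s := (univ : Set ℝ)) γ
              (hu (Nat.zero_le m)) (hu (Nat.le_succ m)) (mem_univ (u m))
            simpa [Set.univ_inter] using this
        rw [hsum n]
        exact eVariationOn.mono γ (Icc_subset_Icc (us 0).1 (us n).2)
end

section
/- Let u : X → ℝ be a continuous function on a metric space X, and for t ∈ ℝ let A_k(t) denote the union of all connected components E of the level set u⁻¹(t) with diam(E) ≥ 1/k. Then A_k := ⋃_{t ∈ ℝ} A_k(t) is a closed subset of X for each k ∈ ℕ, assuming X is proper (closed balls are compact). Consequently, the union A_u of all non-degenerate components of all level sets of u is a Borel (indeed F_σ) set. -/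
open MeasureTheory Set Filter Topology

/-- Boundary bumping: from a preconnected set `C` containing `x` with diameter at least `r`,
extract a preconnected subset of `closure C` containing `x`, of diameter at least `r`,
contained in the ball of radius `2r` around `x`. -/
lemma exists_continuum_aux {X : Type*} [MetricSpace X] [ProperSpace X]
    {C : Set X} (hC : IsPreconnected C) {x : X} (hx : x ∈ C) {r : ℝ} (hr : 0 < r)
    (hdiam : ENNReal.ofReal r ≤ EMetric.diam C) :
    ∃ E : Set X, E ⊆ closure C ∧ IsPreconnected E ∧ x ∈ E ∧
      ENNReal.ofReal r ≤ EMetric.diam E ∧ E ⊆ Metric.closedBall x (2 * r) := by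
  classical
  by_cases hbdd : C ⊆ Metric.closedBall x r
  · exact ⟨C, subset_closure, hC, hx, hdiam,
      hbdd.trans (Metric.closedBall_subset_closedBall (by linarith))⟩
  · obtain ⟨p, hpC, hp⟩ : ∃ p ∈ C, r < dist p x := by
      rcases Set.not_subset.mp hbdd with ⟨p, hpC, hpball⟩
      exact ⟨p, hpC, lt_of_not_ge fun h => hpball (Metric.mem_closedBall.mpr h)⟩
    set K := closure C ∩ Metric.closedBall x (2 * r) with hKdef
    have hKcomp : IsCompact K := (isCompact_closedBall x (2 * r)).inter_left isClosed_closure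
    have hxK : x ∈ K := ⟨subset_closure hx, by
      rw [Metric.mem_closedBall, dist_self]; positivity⟩
    set D := connectedComponentIn K x with hDdef
    by_cases hfar : ∃ y ∈ D, r ≤ dist y x
    · obtain ⟨y, hyD, hy⟩ := hfar
      refine ⟨D, (connectedComponentIn_subset K x).trans Set.inter_subset_left,
        isPreconnected_connectedComponentIn, mem_connectedComponentIn hxK, ?_,
        (connectedComponentIn_subset K x).trans Set.inter_subset_right⟩
      calc ENNReal.ofReal r ≤ ENNReal.ofReal (dist y x) := ENNReal.ofReal_le_ofReal hy
        _ = edist y x := (edist_dist y x).symm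
        _ ≤ EMetric.diam D := EMetric.edist_le_diam_of_mem hyD (mem_connectedComponentIn hxK)
    · push_neg at hfar
      exfalso
      obtain ⟨q, hqC, hq⟩ : ∃ q ∈ closure C, dist q x = r := by
        have h1 : Set.Icc (dist x x) (dist p x) ⊆ (fun y => dist y x) '' closure C :=
          hC.closure.intermediate_value (subset_closure hx) (subset_closure hpC)
            ((continuous_id.dist continuous_const).continuousOn)
        have h2 : r ∈ Set.Icc (dist x x) (dist p x) := by
          rw [dist_self]; exact ⟨hr.le, hp.le⟩
        obtain ⟨q, hq1, hq2⟩ := h1 h2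
        exact ⟨q, hq1, hq2⟩
      have hqK : q ∈ K := ⟨hqC, by rw [Metric.mem_closedBall, hq]; linarith⟩
      haveI : CompactSpace K := isCompact_iff_compactSpace.mp hKcomp
      set x' : K := ⟨x, hxK⟩ with hx'def
      have hcomp := connectedComponent_eq_iInter_isClopen x'
      have hDimg : D = Subtype.val '' connectedComponent x' := connectedComponentIn_eq_image hxK
      set L' : Set K := {z : K | r ≤ dist (z : X) x} with hL'def
      have hL'closed : IsClosed L' := by
        have h : IsClosed {y : X | r ≤ dist y x} :=
          isClosed_le continuous_const (continuous_id.dist continuous_const)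
        exact h.preimage continuous_subtype_val
      have hL'comp : IsCompact L' := hL'closed.isCompact
      have hdisj : L' ∩ ⋂ Z : {Z : Set K // IsClopen Z ∧ x' ∈ Z}, (Z : Set K) = ∅ := by
        rw [← hcomp]
        rw [Set.eq_empty_iff_forall_notMem]
        rintro z ⟨hzL, hzc⟩
        have hzD : (z : X) ∈ D := hDimg ▸ ⟨z, hzc, rfl⟩
        exact absurd hzL (not_le.mpr (hfar _ hzD))
      obtain ⟨fin, hfin⟩ := hL'comp.elim_finite_subfamily_closed _
        (fun i : {Z : Set K // IsClopen Z ∧ x' ∈ Z} => i.2.1.isClosed) hdisj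
      set W : Set K := ⋂ i ∈ fin, (i : {Z : Set K // IsClopen Z ∧ x' ∈ Z}).1 with hWdef
      have hWclopen : IsClopen W := isClopen_biInter_finset fun i _ => i.2.1
      have hx'W : x' ∈ W := Set.mem_iInter₂.mpr fun i _ => i.2.2
      have hWL : ∀ z ∈ W, z ∉ L' := by
        intro z hzW hzL
        rw [Set.eq_empty_iff_forall_notMem] at hfin
        exact hfin z ⟨hzL, hzW⟩
      obtain ⟨O, hOopen, hWO⟩ := isOpen_induced_iff.mp hWclopen.isOpen
      set Z : Set X := Subtype.val '' W with hZdef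
      have hZKO : Z = K ∩ O := by rw [hZdef, ← hWO]; exact Subtype.image_preimage_coe K O
      have hZlt : ∀ y ∈ Z, dist y x < r := by
        rintro y ⟨w, hwW, rfl⟩
        exact not_le.mp fun h => hWL w hwW h
      have hZclosed : IsClosed Z :=
        (hWclopen.isClosed.isCompact.image continuous_subtype_val).isClosed
      have hxZ : x ∈ Z := ⟨x', hx'W, rfl⟩
      have hqZ : q ∉ Z := by
        rintro ⟨w, hwW, hwq⟩
        exact hWL w hwW (show r ≤ dist (w : X) x by rw [hwq, hq])
      set O' : Set X := O ∩ Metric.ball x (2 * r) with hO'def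
      have hZeq : Z = closure C ∩ O' := by
        apply Set.Subset.antisymm
        · intro y hy
          have h1 : y ∈ K ∩ O := hZKO ▸ hy
          have h2 := hZlt y hy
          exact ⟨h1.1.1, h1.2, Metric.mem_ball.mpr (by linarith)⟩
        · rintro y ⟨hyC, hyO, hyball⟩
          rw [hZKO]
          exact ⟨⟨hyC, Metric.ball_subset_closedBall hyball⟩, hyO⟩
      have hcover : closure C ⊆ O' ∪ Zᶜ := by
        intro y hy
        by_cases hyZ : y ∈ Z
        · have : y ∈ closure C ∩ O' := hZeq ▸ hyZ
          exact Or.inl this.2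
        · exact Or.inr hyZ
      have hxO' : x ∈ O' := by
        have : x ∈ closure C ∩ O' := hZeq ▸ hxZ
        exact this.2
      obtain ⟨y, hyC, hyO', hyZc⟩ := hC.closure O' Zᶜ (hOopen.inter Metric.isOpen_ball)
        hZclosed.isOpen_compl hcover ⟨x, subset_closure hx, hxO'⟩ ⟨q, hqC, hqZ⟩
      exact hyZc (hZeq.symm ▸ (⟨hyC, hyO'⟩ : y ∈ closure C ∩ O'))

/-- Kuratowski-type limit of continua: from a sequence of preconnected sets `E n` in a compact
set `K`, on level sets `u = t n`, with diameters at least `c`, containing points `x n → p`,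
produce a preconnected set containing `p`, on the level `s = lim t n`, with diameter ≥ `c`. -/
lemma key_limit {X : Type*} [MetricSpace X] {K : Set X} (hK : IsCompact K)
    (E : ℕ → Set X) (hEK : ∀ n, E n ⊆ K) (hEc : ∀ n, IsPreconnected (E n))
    (x : ℕ → X) (hxE : ∀ n, x n ∈ E n) {p : X} (hx : Tendsto x atTop (𝓝 p))
    {u : X → ℝ} (hu : Continuous u) {t : ℕ → ℝ} {s : ℝ}
    (hts : Tendsto t atTop (𝓝 s)) (hlevel : ∀ n, ∀ y ∈ E n, u y = t n)
    {c : ℝ} (hc : 0 < c) (hdiam : ∀ n, ENNReal.ofReal c ≤ EMetric.diam (E n)) :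
    ∃ F : Set X, IsPreconnected F ∧ p ∈ F ∧ (∀ y ∈ F, u y = s) ∧
      ENNReal.ofReal c ≤ EMetric.diam F := by
  classical
  set F : Set X := ⋂ N : ℕ, closure (⋃ n, ⋃ (_ : N ≤ n), E n) with hFdef
  have hmemF : ∀ (ψ : ℕ → ℕ), (∀ j, j ≤ ψ j) → ∀ (z : ℕ → X), (∀ j, z j ∈ E (ψ j)) →
      ∀ {w : X}, Tendsto z atTop (𝓝 w) → w ∈ F := by
    intro ψ hψ z hz w hw
    refine Set.mem_iInter.mpr fun N => ?_
    refine mem_closure_of_tendsto hw ?_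
    filter_upwards [Filter.eventually_ge_atTop N] with j hj
    exact Set.mem_iUnion.mpr ⟨ψ j, Set.mem_iUnion.mpr ⟨le_trans hj (hψ j), hz j⟩⟩
  have hextract : ∀ w ∈ F, ∃ ψ : ℕ → ℕ, (∀ j, j ≤ ψ j) ∧ ∃ z : ℕ → X,
      (∀ j, z j ∈ E (ψ j)) ∧ Tendsto z atTop (𝓝 w) := by
    intro w hw
    have h : ∀ j : ℕ, ∃ n : ℕ, j ≤ n ∧ ∃ y, y ∈ E n ∧ dist w y < 1 / ((j : ℝ) + 1) := by
      intro j
      have hwj : w ∈ closure (⋃ n, ⋃ (_ : j ≤ n), E n) := Set.mem_iInter.mp hw j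
      obtain ⟨y, hy, hdy⟩ := Metric.mem_closure_iff.mp hwj (1 / ((j : ℝ) + 1)) (by positivity)
      obtain ⟨n, hn⟩ := Set.mem_iUnion.mp hy
      obtain ⟨hjn, hyn⟩ := Set.mem_iUnion.mp hn
      exact ⟨n, hjn, y, hyn, hdy⟩
    choose ψ hψ z hz hdz using h
    refine ⟨ψ, hψ, z, hz, ?_⟩
    rw [tendsto_iff_dist_tendsto_zero]
    refine squeeze_zero (fun j => dist_nonneg) (fun j => ?_)
      tendsto_one_div_add_atTop_nhds_zero_nat
    rw [dist_comm]
    exact (hdz j).le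
  have hFK : F ⊆ K := by
    intro w hw
    have h0 : w ∈ closure (⋃ n, ⋃ (_ : 0 ≤ n), E n) := Set.mem_iInter.mp hw 0
    have hsub : (⋃ n, ⋃ (_ : 0 ≤ n), E n) ⊆ K := by
      simp only [Set.iUnion_subset_iff]
      intro n _
      exact hEK n
    exact (closure_minimal hsub hK.isClosed) h0
  have hpF : p ∈ F := hmemF id (fun j => le_rfl) x hxE hx
  have hFclosed : IsClosed F := isClosed_iInter fun _ => isClosed_closure
  have hFcomp : IsCompact F := hK.of_isClosed_subset hFclosed hFK
  have hFlevel : ∀ y ∈ F, u y = s := by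
    intro w hw
    obtain ⟨ψ, hψ, z, hz, hzw⟩ := hextract w hw
    have h1 : Tendsto (fun j => u (z j)) atTop (𝓝 (u w)) := (hu.tendsto w).comp hzw
    have hψt : Tendsto ψ atTop atTop := tendsto_atTop_mono hψ tendsto_id
    have h2 : Tendsto (fun j => u (z j)) atTop (𝓝 s) :=
      (hts.comp hψt).congr fun j => (hlevel (ψ j) (z j) (hz j)).symm
    exact tendsto_nhds_unique h1 h2
  have hFconn : IsPreconnected F := by
    intro U V hU hV hcov hne1 hne2
    obtain ⟨y₁, hy₁F, hy₁U⟩ := hne1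
    obtain ⟨y₂, hy₂F, hy₂V⟩ := hne2
    by_contra hcon
    have hUV : F ∩ (U ∩ V) = ∅ := Set.not_nonempty_iff_eq_empty.mp hcon
    have hAc : F ∩ U = F ∩ Vᶜ := by
      apply Set.Subset.antisymm
      · rintro y ⟨hyF, hyU⟩
        refine ⟨hyF, fun hyV => ?_⟩
        rw [Set.eq_empty_iff_forall_notMem] at hUV
        exact hUV y ⟨hyF, hyU, hyV⟩
      · rintro y ⟨hyF, hyV⟩
        rcases hcov hyF with h | h
        · exact ⟨hyF, h⟩
        · exact absurd h hyV
    have hBc : F ∩ V = F ∩ Uᶜ := by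
      apply Set.Subset.antisymm
      · rintro y ⟨hyF, hyV⟩
        refine ⟨hyF, fun hyU => ?_⟩
        rw [Set.eq_empty_iff_forall_notMem] at hUV
        exact hUV y ⟨hyF, hyU, hyV⟩
      · rintro y ⟨hyF, hyU⟩
        rcases hcov hyF with h | h
        · exact absurd h hyU
        · exact ⟨hyF, h⟩
    have hAclosed : IsClosed (F ∩ U) := hAc ▸ (hFclosed.inter hV.isClosed_compl)
    have hBclosed : IsClosed (F ∩ V) := hBc ▸ (hFclosed.inter hU.isClosed_compl)
    have hABdisj : Disjoint (F ∩ U) (F ∩ V) := by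
      rw [Set.disjoint_left]
      rintro y ⟨hyF, hyU⟩ ⟨_, hyV⟩
      rw [Set.eq_empty_iff_forall_notMem] at hUV
      exact hUV y ⟨hyF, hyU, hyV⟩
    obtain ⟨U', V', hU', hV', hAU', hBV', hU'V'⟩ :=
      NormalSpace.normal (F ∩ U) (F ∩ V) hAclosed hBclosed hABdisj
    have hFcov' : F ⊆ U' ∪ V' := by
      intro y hy
      rcases hcov hy with h | h
      · exact Or.inl (hAU' ⟨hy, h⟩)
      · exact Or.inr (hBV' ⟨hy, h⟩)
    have main : ∀ W₁ W₂ : Set X, IsOpen W₁ → IsOpen W₂ → Disjoint W₁ W₂ →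
        F ⊆ W₁ ∪ W₂ → p ∈ W₁ → ∀ q ∈ F, q ∈ W₂ → False := by
      intro W₁ W₂ hW₁ hW₂ hdisjW hFcov hpW q hqF hqW
      obtain ⟨N₁, hN₁⟩ := Filter.eventually_atTop.mp (hx.eventually (hW₁.eventually_mem hpW))
      obtain ⟨ψq, hψq, zq, hzq, hzqw⟩ := hextract q hqF
      obtain ⟨N₂, hN₂⟩ := Filter.eventually_atTop.mp (hzqw.eventually (hW₂.eventually_mem hqW))
      have hbad : ∀ j : ℕ, ∃ n, j ≤ n ∧ ∃ w, w ∈ E n ∧ w ∉ W₁ ∪ W₂ := by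
        intro j
        set m := max (max j N₁) N₂ with hmdef
        have hjm : j ≤ m := le_trans (le_max_left _ _) (le_max_left _ _)
        have hN₁m : N₁ ≤ ψq m :=
          le_trans (le_trans (le_max_right _ _) (le_max_left _ _)) (hψq m)
        have hN₂m : N₂ ≤ m := le_max_right _ _
        refine ⟨ψq m, le_trans hjm (hψq m), ?_⟩
        have h1 : (E (ψq m) ∩ W₁).Nonempty := ⟨x (ψq m), hxE (ψq m), hN₁ (ψq m) hN₁m⟩
        have h2 : (E (ψq m) ∩ W₂).Nonempty := ⟨zq m, hzq m, hN₂ m hN₂m⟩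
        by_contra hcon2
        push_neg at hcon2
        have hsub : E (ψq m) ⊆ W₁ ∪ W₂ := fun w hw => hcon2 w hw
        obtain ⟨w, _, hw1, hw2⟩ := hEc (ψq m) W₁ W₂ hW₁ hW₂ hsub h1 h2
        exact (Set.disjoint_left.mp hdisjW hw1) hw2
      choose m hm w hw hwout using hbad
      obtain ⟨w', hw'K, φ, hφ, hwconv⟩ := hK.tendsto_subseq (fun j => hEK (m j) (hw j))
      have hw'F : w' ∈ F := hmemF (m ∘ φ) (fun j => le_trans hφ.le_apply (hm (φ j)))
        (fun j => w (φ j)) (fun j => hw (φ j)) hwconv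
      have hw'out : w' ∉ W₁ ∪ W₂ := by
        have hcl : IsClosed (W₁ ∪ W₂)ᶜ := (hW₁.union hW₂).isClosed_compl
        exact hcl.mem_of_tendsto hwconv (Filter.Eventually.of_forall fun j => hwout (φ j))
      exact hw'out (hFcov hw'F)
    rcases hFcov' hpF with hp1 | hp2
    · exact main U' V' hU' hV' hU'V' hFcov' hp1 y₂ hy₂F (hBV' ⟨hy₂F, hy₂V⟩)
    · exact main V' U' hV' hU' hU'V'.symm
        (fun y hy => (hFcov' hy).symm) hp2 y₁ hy₁F (hAU' ⟨hy₁F, hy₁U⟩)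
  refine ⟨F, hFconn, hpF, hFlevel, ?_⟩
  have hab : ∀ j : ℕ, ∃ a, a ∈ E j ∧ ∃ b, b ∈ E j ∧ c - 1 / ((j : ℝ) + 1) < dist a b := by
    intro j
    by_contra hcon
    push_neg at hcon
    have hle : EMetric.diam (E j) ≤ ENNReal.ofReal (c - 1 / ((j : ℝ) + 1)) := by
      refine EMetric.diam_le fun a ha b hb => ?_
      rw [edist_dist]
      exact ENNReal.ofReal_le_ofReal (hcon a ha b hb)
    have hlt : ENNReal.ofReal (c - 1 / ((j : ℝ) + 1)) < ENNReal.ofReal c :=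
      (ENNReal.ofReal_lt_ofReal_iff hc).mpr (sub_lt_self _ (by positivity))
    exact absurd ((hdiam j).trans hle) (not_le.mpr hlt)
  choose a ha b hb hdist using hab
  obtain ⟨a', ha'K, φ, hφ, haconv⟩ := hK.tendsto_subseq (fun j => hEK j (ha j))
  obtain ⟨b', hb'K, φ', hφ', hbconv⟩ :=
    hK.tendsto_subseq (x := fun j => b (φ j)) (fun j => hEK (φ j) (hb (φ j)))
  set ψ := φ ∘ φ' with hψdef
  have hψge : ∀ j, j ≤ ψ j := fun j => le_trans hφ'.le_apply hφ.le_apply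
  have haconv' : Tendsto (fun j => a (ψ j)) atTop (𝓝 a') := haconv.comp hφ'.tendsto_atTop
  have hbconv' : Tendsto (fun j => b (ψ j)) atTop (𝓝 b') := hbconv
  have ha'F : a' ∈ F := hmemF ψ hψge _ (fun j => ha (ψ j)) haconv'
  have hb'F : b' ∈ F := hmemF ψ hψge _ (fun j => hb (ψ j)) hbconv'
  have hcd : c ≤ dist a' b' := by
    have h1 : Tendsto (fun j : ℕ => c - 1 / ((j : ℝ) + 1)) atTop (𝓝 c) := by
      have h0 := tendsto_one_div_add_atTop_nhds_zero_nat (𝕜 := ℝ)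
      have := (tendsto_const_nhds (x := c) (f := atTop)).sub h0
      simpa using this
    have h2 : Tendsto (fun j => dist (a (ψ j)) (b (ψ j))) atTop (𝓝 (dist a' b')) :=
      haconv'.dist hbconv'
    refine le_of_tendsto_of_tendsto' h1 h2 fun j => ?_
    have hj1 : (1 : ℝ) / ((ψ j : ℝ) + 1) ≤ 1 / ((j : ℝ) + 1) := by
      apply one_div_le_one_div_of_le
      · positivity
      · have : (j : ℝ) ≤ (ψ j : ℝ) := by exact_mod_cast hψge j
        linarith
    calc c - 1 / ((j : ℝ) + 1) ≤ c - 1 / ((ψ j : ℝ) + 1) := by linarith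
      _ ≤ dist (a (ψ j)) (b (ψ j)) := (hdist (ψ j)).le
  calc ENNReal.ofReal c ≤ ENNReal.ofReal (dist a' b') := ENNReal.ofReal_le_ofReal hcd
    _ = edist a' b' := (edist_dist _ _).symm
    _ ≤ EMetric.diam F := EMetric.edist_le_diam_of_mem ha'F hb'F

/-- For a continuous function `u` on a proper metric space, the union `A_k` of all
components of level sets of `u` with diameter at least `1/k` is closed, and hence
the union of all non-degenerate components of level sets of `u` is Borel. -/
theorem nondegenerate_level_components_borel {X : Type*} [MetricSpace X]
    [ProperSpace X] [MeasurableSpace X] [BorelSpace X]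
    (u : X → ℝ) (hu : Continuous u) :
    (∀ k : ℕ, 0 < k →
      IsClosed {x : X | ENNReal.ofReal (1 / (k : ℝ)) ≤
        EMetric.diam (connectedComponentIn (u ⁻¹' {u x}) x)}) ∧
    MeasurableSet {x : X | (connectedComponentIn (u ⁻¹' {u x}) x).Nontrivial} := by
  have hclosed : ∀ k : ℕ, 0 < k →
      IsClosed {x : X | ENNReal.ofReal (1 / (k : ℝ)) ≤
        EMetric.diam (connectedComponentIn (u ⁻¹' {u x}) x)} := by
    intro k hk
    have hc : (0 : ℝ) < 1 / (k : ℝ) := by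
      have : (0 : ℝ) < (k : ℝ) := by exact_mod_cast hk
      positivity
    set c : ℝ := 1 / (k : ℝ) with hcdef
    apply IsSeqClosed.isClosed
    intro x p hmem hxp
    have hE : ∀ n : ℕ, ∃ E : Set X,
        E ⊆ closure (connectedComponentIn (u ⁻¹' {u (x n)}) (x n)) ∧ IsPreconnected E ∧
        x n ∈ E ∧ ENNReal.ofReal c ≤ EMetric.diam E ∧
        E ⊆ Metric.closedBall (x n) (2 * c) := by
      intro n
      exact exists_continuum_aux isPreconnected_connectedComponentIn
        (mem_connectedComponentIn (show x n ∈ u ⁻¹' {u (x n)} from rfl)) hc (hmem n)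
    choose E hEsub hEc hxE hEdiam hEball using hE
    have hlevel : ∀ n, ∀ y ∈ E n, u y = u (x n) := by
      intro n y hy
      have h1 : closure (connectedComponentIn (u ⁻¹' {u (x n)}) (x n)) ⊆ u ⁻¹' {u (x n)} :=
        closure_minimal (connectedComponentIn_subset _ _)
          (IsClosed.preimage hu isClosed_singleton)
      exact h1 (hEsub n hy)
    obtain ⟨N, hN⟩ := Metric.tendsto_atTop.mp hxp 1 one_pos
    have hEK : ∀ n, E (n + N) ⊆ Metric.closedBall p (2 * c + 1) := by
      intro n y hy
      have h1 := Metric.mem_closedBall.mp (hEball (n + N) hy)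
      have h2 := (hN (n + N) (Nat.le_add_left N n)).le
      rw [Metric.mem_closedBall]
      calc dist y p ≤ dist y (x (n + N)) + dist (x (n + N)) p := dist_triangle _ _ _
        _ ≤ 2 * c + 1 := by linarith
    have hxp' : Tendsto (fun n => x (n + N)) atTop (𝓝 p) :=
      hxp.comp (tendsto_add_atTop_nat N)
    obtain ⟨F, hFc, hpF, hFlev, hFdiam⟩ := key_limit (isCompact_closedBall p (2 * c + 1))
      (fun n => E (n + N)) hEK (fun n => hEc (n + N)) (fun n => x (n + N))
      (fun n => hxE (n + N)) hxp' hu (t := fun n => u (x (n + N))) (s := u p)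
      ((hu.tendsto p).comp hxp') (fun n => hlevel (n + N)) hc (fun n => hEdiam (n + N))
    have hFsub : F ⊆ u ⁻¹' {u p} := fun y hy => hFlev y hy
    have hsubcomp := hFc.subset_connectedComponentIn hpF hFsub
    exact hFdiam.trans (EMetric.diam_mono hsubcomp)
  refine ⟨hclosed, ?_⟩
  have heq : {x : X | (connectedComponentIn (u ⁻¹' {u x}) x).Nontrivial} =
      ⋃ k : ℕ, ⋃ (_ : 0 < k), {x : X | ENNReal.ofReal (1 / (k : ℝ)) ≤
        EMetric.diam (connectedComponentIn (u ⁻¹' {u x}) x)} := by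
    ext x
    simp only [Set.mem_setOf_eq, Set.mem_iUnion]
    constructor
    · intro h
      have hpos : 0 < EMetric.diam (connectedComponentIn (u ⁻¹' {u x}) x) :=
        EMetric.diam_pos_iff.mpr h
      obtain ⟨n, hn⟩ := ENNReal.exists_inv_nat_lt hpos.ne'
      have hn0 : 0 < n := by
        rcases Nat.eq_zero_or_pos n with h0 | h0
        · exfalso
          rw [h0] at hn
          simp at hn
        · exact h0
      refine ⟨n, hn0, ?_⟩
      have hcast : ENNReal.ofReal (1 / (n : ℝ)) = (n : ENNReal)⁻¹ := by
        rw [one_div, ENNReal.ofReal_inv_of_pos (by exact_mod_cast hn0), ENNReal.ofReal_natCast]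
      rw [hcast]
      exact hn.le
    · rintro ⟨k, hk, hle⟩
      refine EMetric.diam_pos_iff.mp (lt_of_lt_of_le ?_ hle)
      apply ENNReal.ofReal_pos.mpr
      have : (0 : ℝ) < (k : ℝ) := by exact_mod_cast hk
      positivity
  rw [heq]
  exact MeasurableSet.iUnion fun k => MeasurableSet.iUnion fun hk => (hclosed k hk).measurableSet
end

section
/- Let B ⊂ ℝ² be a symmetric convex body (compact convex set with nonempty interior, symmetric about the origin) and let E ⊆ B be its John ellipse, i.e. the ellipse of maximal area contained in B centered at the origin. Then B ⊆ √2·E. -/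
open MeasureTheory Pointwise ENNReal

noncomputable section JohnAux

private abbrev V2 := EuclideanSpace ℝ (Fin 2)

private lemma esq (v : V2) : ‖v‖^2 = (v 0)^2 + (v 1)^2 := by
  rw [EuclideanSpace.norm_eq, Real.sq_sqrt (by positivity)]
  simp [Fin.sum_univ_two, sq_abs]

/-- diagonal linear map on the plane -/
private def diagMap (a b : ℝ) : V2 →ₗ[ℝ] V2 where
  toFun v := WithLp.toLp 2 ![a * v 0, b * v 1]
  map_add' v w := by
    ext i
    fin_cases i <;> simp [PiLp.add_apply] <;> ring
  map_smul' r v := by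
    ext i
    fin_cases i <;> simp [PiLp.smul_apply, smul_eq_mul] <;> ring

private lemma diagMap_comp (a b a' b' : ℝ) :
    (diagMap a b).comp (diagMap a' b') = diagMap (a*a') (b*b') := by
  refine LinearMap.ext fun v => ?_
  ext i
  fin_cases i <;> simp [diagMap] <;> ring

private def diagEquiv {a b : ℝ} (ha : a ≠ 0) (hb : b ≠ 0) : V2 ≃ₗ[ℝ] V2 :=
  LinearEquiv.ofLinear (diagMap a b) (diagMap a⁻¹ b⁻¹)
    (by rw [diagMap_comp, mul_inv_cancel₀ ha, mul_inv_cancel₀ hb]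
        refine LinearMap.ext fun v => ?_
        ext i
        fin_cases i <;> simp [diagMap])
    (by rw [diagMap_comp, inv_mul_cancel₀ ha, inv_mul_cancel₀ hb]
        refine LinearMap.ext fun v => ?_
        ext i
        fin_cases i <;> simp [diagMap])

private lemma diagEquiv_apply {a b : ℝ} (ha : a ≠ 0) (hb : b ≠ 0) (v : V2) :
    diagEquiv ha hb v = diagMap a b v := rfl

private lemma diagMap_det (a b : ℝ) : LinearMap.det (diagMap a b) = a * b := by
  classical
  let bb := (EuclideanSpace.basisFun (Fin 2) ℝ).toBasis
  rw [← LinearMap.det_toMatrix bb]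
  have h : LinearMap.toMatrix bb bb (diagMap a b) = Matrix.of ![![a, 0], ![0, b]] := by
    ext i j
    fin_cases i <;> fin_cases j <;>
      simp [LinearMap.toMatrix_apply, bb, diagMap, EuclideanSpace.single_apply,
        EuclideanSpace.basisFun_apply]
  rw [h, Matrix.det_fin_two_of]
  ring

private lemma key_ineq {s a b c : ℝ} (hs : 2 < s^2) (hs0 : 0 < s)
    (ha : a^2 = s^2/2) (hb : b^2 * (s^2-1) = s^2/2)
    (ha0 : 0 < a) (hc0 : 0 ≤ c) (hc1 : c ≤ 1) :
    ∃ l : ℝ, 0 ≤ l ∧ l < 1 ∧ (a*c - l*s)^2 + b^2*(1-c^2) ≤ (1-l)^2 := by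
  have hs1 : (1:ℝ) < s^2 - 1 := by nlinarith
  have hs1' : (0:ℝ) < s^2 - 1 := by linarith
  rcases le_or_gt (a*c*s) 1 with h | h
  · refine ⟨0, le_refl _, one_pos, ?_⟩
    have h1 : (0:ℝ) ≤ a*c*s := by positivity
    have h2 : (a*c*s)^2 ≤ 1 := by nlinarith
    have h4 : c^2*s^2*s^2 ≤ 2 := by nlinarith [sq_nonneg c]
    have h5 : c^2*s^2 ≤ 1 := by nlinarith [mul_nonneg (sq_nonneg c) (sq_nonneg s)]
    have hkey : (s^2-1) * (1 - ((a*c-0*s)^2 + b^2*(1-c^2))) =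
        (s^2-2)*(1-c^2*s^2)/2 - c^2*(s^2-1)*(a^2 - s^2/2) - (1-c^2)*(b^2*(s^2-1) - s^2/2) := by
      ring
    have hP : (0:ℝ) ≤ (s^2-2)*(1-c^2*s^2)/2 := by
      apply div_nonneg _ (by norm_num)
      apply mul_nonneg (by linarith) (by linarith)
    nlinarith [hkey, hP, ha, hb, hs1']
  · set l : ℝ := (a*c*s - 1)/(s^2-1) with hl
    have hl0 : 0 ≤ l := div_nonneg (by linarith) (by linarith)
    have has : a < s := by nlinarith
    have hacs : a*c < s := by nlinarith
    have hl1 : l < 1 := by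
      rw [hl, div_lt_one hs1']
      nlinarith
    refine ⟨l, hl0, hl1, ?_⟩
    have hle : l * (s^2-1) = a*c*s - 1 := by
      rw [hl, div_mul_cancel₀ _ hs1'.ne']
    have key : (s^2-1)*((1-l)^2 - ((a*c-l*s)^2 + b^2*(1-c^2))) = (s*c-a)^2 := by
      linear_combination ((a*c*s - 1) - l*(s^2-1)) * hle + (c^2-1)*ha + (c^2-1)*hb
    nlinarith [key, sq_nonneg (s*c-a), hs1']

private lemma exists_rot (u : V2) (hu : ‖u‖ = 1) :
    ∃ R : V2 ≃ₗᵢ[ℝ] V2, R (EuclideanSpace.single 0 1) = u := by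
  have hortho : Orthonormal ℝ (({0} : Set (Fin 2)).restrict ![u, 0]) := by
    constructor
    · rintro ⟨i, hi⟩
      simp only [Set.mem_singleton_iff] at hi
      subst hi
      exact hu
    · rintro ⟨i, hi⟩ ⟨j, hj⟩ hij
      simp only [Set.mem_singleton_iff] at hi hj
      exact absurd (Subtype.ext (hi.trans hj.symm)) hij
  obtain ⟨b, hb⟩ := hortho.exists_orthonormalBasis_extension_of_card_eq (by simp)
  refine ⟨b.repr.symm, ?_⟩
  rw [b.repr_symm_single]
  simpa using hb 0 rfl

end JohnAux

/-- An ellipse centered at the origin in the plane: the image of the closed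
Euclidean unit disk under an invertible linear map. -/
def IsEllipse (E : Set (EuclideanSpace ℝ (Fin 2))) : Prop :=
  ∃ T : EuclideanSpace ℝ (Fin 2) ≃ₗ[ℝ] EuclideanSpace ℝ (Fin 2),
    E = T '' Metric.closedBall 0 1

set_option maxHeartbeats 1000000 in
/-- John's theorem in the plane: a symmetric convex body is contained in `√2`
times its maximal-area inscribed ellipse. -/
theorem john_theorem_plane (B E : Set (EuclideanSpace ℝ (Fin 2)))
    (hBcomp : IsCompact B) (hBconv : Convex ℝ B)
    (hBint : (interior B).Nonempty) (hBsymm : ∀ x ∈ B, -x ∈ B)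
    (hE : IsEllipse E) (hEB : E ⊆ B)
    (hmax : ∀ E' : Set (EuclideanSpace ℝ (Fin 2)),
      IsEllipse E' → E' ⊆ B → volume E' ≤ volume E) :
    B ⊆ Real.sqrt 2 • E := by
  obtain ⟨T, hT⟩ := hE
  intro y hy
  by_contra hyE
  -- the point y is far: ‖T.symm y‖ > √2
  set x : V2 := T.symm y with hxdef
  have hxy : T x = y := T.apply_symm_apply y
  have hs2 : Real.sqrt 2 < ‖x‖ := by
    by_contra hle
    push_neg at hle
    apply hyE
    have h2 : (0:ℝ) < Real.sqrt 2 := by positivity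
    refine Set.mem_smul_set.2 ⟨T ((Real.sqrt 2)⁻¹ • x), ?_, ?_⟩
    · rw [hT]
      refine ⟨(Real.sqrt 2)⁻¹ • x, ?_, rfl⟩
      rw [Metric.mem_closedBall, dist_zero_right, norm_smul, Real.norm_eq_abs,
        abs_of_pos (by positivity)]
      rw [inv_mul_le_iff₀ h2, mul_one]
      exact hle
    · rw [_root_.map_smul, hxy, smul_smul, mul_inv_cancel₀ h2.ne', one_smul]
  set s : ℝ := ‖x‖ with hsdef
  have hs0 : (0:ℝ) < s := lt_trans (by positivity) hs2
  have hs : 2 < s^2 := by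
    have h2 : Real.sqrt 2 ^ 2 = 2 := Real.sq_sqrt (by norm_num)
    nlinarith [Real.sqrt_nonneg 2]
  -- the unit vector in direction x and a rotation
  set u : V2 := s⁻¹ • x with hudef
  have hu : ‖u‖ = 1 := by
    rw [hudef, norm_smul, Real.norm_eq_abs, abs_inv, abs_of_pos hs0, ← hsdef,
      inv_mul_cancel₀ hs0.ne']
  obtain ⟨R, hR⟩ := exists_rot u hu
  have hsu : s • u = x := by
    rw [hudef, smul_smul, mul_inv_cancel₀ hs0.ne', one_smul]
  -- the bigger ellipse's axes
  have hsq1 : (0:ℝ) < Real.sqrt (s^2 - 1) := Real.sqrt_pos.2 (by linarith)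
  set a : ℝ := s / Real.sqrt 2 with hadef
  set b : ℝ := s / (Real.sqrt 2 * Real.sqrt (s^2 - 1)) with hbdef
  have ha0 : 0 < a := by positivity
  have hb0 : 0 < b := by positivity
  have ha2 : a^2 = s^2/2 := by
    rw [hadef, div_pow, Real.sq_sqrt (by norm_num : (0:ℝ) ≤ 2)]
  have hb2 : b^2 * (s^2-1) = s^2/2 := by
    rw [hbdef, div_pow, mul_pow, Real.sq_sqrt (by norm_num : (0:ℝ) ≤ 2),
      Real.sq_sqrt (by linarith : (0:ℝ) ≤ s^2 - 1)]
    have hgt : (0:ℝ) < s^2 - 1 := by linarith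
    rw [div_mul_eq_mul_div, div_eq_div_iff (mul_pos two_pos hgt).ne' (two_ne_zero)]
    ring
  have hab1 : 1 < a * b := by
    have habs : (a*b)^2 * (4*(s^2-1)) = s^2 * s^2 := by
      have : (a*b)^2 = a^2 * b^2 := by ring
      rw [this, ha2]
      nlinarith [hb2]
    by_contra hle
    push_neg at hle
    have hab0 : 0 < a * b := mul_pos ha0 hb0
    have h1 : (a*b)^2 ≤ 1 := by nlinarith
    have h3 : 0 ≤ (1-(a*b)^2) * (4*(s^2-1)) := mul_nonneg (by linarith) (by linarith)
    have h4 : s^2*s^2 ≤ 4*(s^2-1) := by nlinarith [habs, h3]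
    nlinarith [mul_pos (sub_pos.2 hs) (sub_pos.2 hs)]
  -- the composed linear equivalence
  set S : V2 ≃ₗ[ℝ] V2 := (diagEquiv ha0.ne' hb0.ne').trans (R.toLinearEquiv.trans T) with hSdef
  -- the new ellipse is inside B
  have hsub : ⇑S '' Metric.closedBall 0 1 ⊆ B := by
    rintro _ ⟨w, hw, rfl⟩
    rw [Metric.mem_closedBall, dist_zero_right] at hw
    have hw2 : (w 0)^2 + (w 1)^2 ≤ 1 := by
      rw [← esq]; nlinarith [norm_nonneg w]
    set σ : ℝ := if 0 ≤ w 0 then 1 else -1 with hσdef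
    have hσsq : σ^2 = 1 := by
      rw [hσdef]; split <;> norm_num
    have hc0 : 0 ≤ σ * w 0 := by
      rw [hσdef]; split_ifs with h
      · linarith
      · push_neg at h; nlinarith
    set c : ℝ := σ * w 0 with hcdef
    have hcsq : c^2 = (w 0)^2 := by
      rw [hcdef]; nlinarith [hσsq]
    have hc1 : c ≤ 1 := by nlinarith [sq_nonneg (w 1)]
    obtain ⟨l, hl0, hl1, hlkey⟩ := key_ineq hs hs0 ha2 hb2 ha0 hc0 hc1
    set e0 : V2 := EuclideanSpace.single 0 1 with he0def
    set v : V2 := (σ * s) • e0 with hvdef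
    set p : V2 := diagMap a b w with hpdef
    have hp0 : p 0 = a * w 0 := rfl
    have hp1 : p 1 = b * w 1 := rfl
    have he00 : e0 0 = 1 := by simp [he0def, EuclideanSpace.single_apply]
    have he01 : e0 1 = 0 := by simp [he0def, EuclideanSpace.single_apply]
    -- the displaced point is within distance 1 - l of (σ s) e0
    have hnormsq : ‖p - l • v‖^2 ≤ (1-l)^2 := by
      rw [esq]
      have h0 : (p - l • v) 0 = a * w 0 - l * (σ * s) := by
        simp [PiLp.sub_apply, PiLp.smul_apply, hp0, hvdef, he00, smul_eq_mul]
        try ring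
      have h1 : (p - l • v) 1 = b * w 1 := by
        simp [PiLp.sub_apply, PiLp.smul_apply, hp1, hvdef, he01, smul_eq_mul]
        try ring
      rw [h0, h1]
      have hsw : (a * w 0 - l * (σ * s))^2 = (a*c - l*s)^2 := by
        rw [hcdef]
        linear_combination (l^2*s^2 - a^2*(w 0)^2) * hσsq
      have hbw : (b * w 1)^2 ≤ b^2 * (1 - c^2) := by
        rw [hcsq]
        nlinarith [sq_nonneg b]
      calc (a * w 0 - l * (σ * s))^2 + (b * w 1)^2
          ≤ (a*c - l*s)^2 + b^2*(1-c^2) := by rw [hsw]; linarith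
        _ ≤ (1-l)^2 := hlkey
    have h1l : (0:ℝ) < 1 - l := by linarith
    have hnorm : ‖p - l • v‖ ≤ 1 - l := by
      have h := Real.sqrt_le_sqrt hnormsq
      rwa [Real.sqrt_sq (norm_nonneg _), Real.sqrt_sq h1l.le] at h
    set q : V2 := (1 - l)⁻¹ • (p - l • v) with hqdef
    have hq1 : ‖q‖ ≤ 1 := by
      rw [hqdef, norm_smul, Real.norm_eq_abs, abs_inv, abs_of_pos h1l,
        inv_mul_le_iff₀ h1l, mul_one]
      exact hnorm
    have h2q : (1 - l) • q = p - l • v := by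
      rw [hqdef, smul_smul, mul_inv_cancel₀ h1l.ne', one_smul]
    have hpq : p = l • v + (1 - l) • q := by
      rw [h2q]; abel
    -- identify S w
    have hSw : S w = l • (σ • y) + (1 - l) • (T (R q)) := by
      have h1 : S w = T (R p) := rfl
      have hRv : T (R v) = σ • y := by
        rw [hvdef, _root_.map_smul, _root_.map_smul, hR, hudef, _root_.map_smul, hxy,
          smul_smul, show σ * s * s⁻¹ = σ by field_simp]
      rw [h1, hpq]
      simp only [map_add, _root_.map_smul, hRv]
    -- membership in B
    have hy1 : σ • y ∈ B := by
      rw [hσdef]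
      split
      · rw [one_smul]; exact hy
      · rw [show ((-1:ℝ)) • y = -y by simp]
        exact hBsymm y hy
    have hy2 : T (R q) ∈ B := by
      apply hEB
      rw [hT]
      refine ⟨R q, ?_, rfl⟩
      rw [Metric.mem_closedBall, dist_zero_right, R.norm_map]
      exact hq1
    rw [hSw]
    exact hBconv hy1 hy2 hl0 h1l.le (by ring)
  -- the new ellipse has bigger volume : contradiction
  have hmax' := hmax (⇑S '' Metric.closedBall 0 1) ⟨S, rfl⟩ hsub
  -- compute the volumes
  set vb : ℝ≥0∞ := volume (Metric.closedBall (0:V2) 1) with hvbdef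
  have hvb0 : 0 < vb := Metric.measure_closedBall_pos volume 0 one_pos
  have hvbt : vb < ⊤ := measure_closedBall_lt_top
  have hdT : LinearMap.det (T : V2 →ₗ[ℝ] V2) ≠ 0 := (LinearEquiv.isUnit_det' T).ne_zero
  have hvolT : ∀ A : Set V2, volume (⇑T '' A)
      = ENNReal.ofReal |LinearMap.det (T : V2 →ₗ[ℝ] V2)| * volume A := by
    intro A
    rw [← Measure.addHaar_image_linearMap volume (T : V2 →ₗ[ℝ] V2)]
    simp
  have hvolE : volume E = ENNReal.ofReal |LinearMap.det (T : V2 →ₗ[ℝ] V2)| * vb := by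
    rw [hT, hvolT]
  have hDball : ⇑(diagEquiv ha0.ne' hb0.ne') '' Metric.closedBall 0 1
      = ⇑(diagMap a b) '' Metric.closedBall 0 1 := rfl
  have hcomp : ⇑S '' Metric.closedBall 0 1
      = ⇑T '' (⇑R '' (⇑(diagMap a b) '' Metric.closedBall 0 1)) := by
    rw [← hDball, ← Set.image_comp, ← Set.image_comp]
    rfl
  have hAmeas : NullMeasurableSet (⇑(diagMap a b) '' Metric.closedBall 0 1) (volume : Measure V2) := by
    have hcpt : IsCompact (⇑(diagMap a b) '' Metric.closedBall 0 1) :=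
      (isCompact_closedBall 0 1).image (diagMap a b).continuous_of_finiteDimensional
    exact hcpt.isClosed.measurableSet.nullMeasurableSet
  have hvolR : volume (⇑R '' (⇑(diagMap a b) '' Metric.closedBall 0 1))
      = volume (⇑(diagMap a b) '' Metric.closedBall 0 1) := by
    rw [R.image_eq_preimage_symm]
    exact (R.symm.measurePreserving).measure_preimage (by simpa using hAmeas)
  have hvolD : volume (⇑(diagMap a b) '' Metric.closedBall 0 1)
      = ENNReal.ofReal (a*b) * vb := by
    rw [Measure.addHaar_image_linearMap volume (diagMap a b), diagMap_det,
      abs_of_pos (mul_pos ha0 hb0), hvbdef]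
  have hvolS : volume (⇑S '' Metric.closedBall 0 1)
      = ENNReal.ofReal |LinearMap.det (T : V2 →ₗ[ℝ] V2)| * (ENNReal.ofReal (a*b) * vb) := by
    rw [hcomp, hvolT, hvolR, hvolD]
  rw [hvolS, hvolE] at hmax'
  -- contradiction
  have hc1 : ENNReal.ofReal |LinearMap.det (T : V2 →ₗ[ℝ] V2)| ≠ 0 := by
    simp only [ne_eq, ENNReal.ofReal_eq_zero, not_le]
    exact abs_pos.2 hdT
  have hc2 : ENNReal.ofReal |LinearMap.det (T : V2 →ₗ[ℝ] V2)| ≠ ⊤ := ENNReal.ofReal_ne_top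
  have hlt : vb < ENNReal.ofReal (a*b) * vb := by
    conv_lhs => rw [← one_mul vb]
    apply ENNReal.mul_lt_mul_iff_left hvb0.ne' hvbt.ne |>.2
    rw [← ENNReal.ofReal_one]
    exact ENNReal.ofReal_lt_ofReal_iff (by linarith) |>.2 hab1
  have := (ENNReal.mul_lt_mul_iff_right hc1 hc2).2 hlt
  exact absurd hmax' (not_le.2 this)
end

section
/- Let N and Ñ be two norms on ℝ² with unit balls B = {N ≤ 1} and B̃ = {Ñ ≤ 1}. Suppose the Lebesgue areas satisfy |B| = |B̃| and Ñ(v) ≤ L·N(v) for all v ∈ ℝ² for some L ≥ 1. Then N(v) ≤ 4L·Ñ(v) for all v ∈ ℝ². -/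
open MeasureTheory Set

noncomputable def lmap (p q r s : ℝ) : (ℝ × ℝ) →ₗ[ℝ] (ℝ × ℝ) where
  toFun v := (p * v.1 + q * v.2, r * v.1 + s * v.2)
  map_add' a b := by simp [Prod.ext_iff]; constructor <;> ring
  map_smul' c a := by simp [Prod.ext_iff, smul_eq_mul]; constructor <;> ring

lemma lmap_apply (p q r s : ℝ) (v : ℝ × ℝ) :
    lmap p q r s v = (p * v.1 + q * v.2, r * v.1 + s * v.2) := rfl

lemma lmap_det (p q r s : ℝ) : LinearMap.det (lmap p q r s) = p * s - q * r := by
  rw [← LinearMap.det_toMatrix (Module.Basis.finTwoProd ℝ), Matrix.det_fin_two]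
  simp [LinearMap.toMatrix_apply, lmap_apply, Module.Basis.finTwoProd_zero, Module.Basis.finTwoProd_one,
    Module.Basis.coe_finTwoProd_repr]

lemma lmap_inv_left (a b : ℝ) (hd : a^2+b^2 ≠ 0) (w : ℝ × ℝ) :
    lmap (a/(a^2+b^2)) (-b/(a^2+b^2)) (b/(a^2+b^2)) (a/(a^2+b^2)) (lmap a b (-b) a w) = w := by
  rw [lmap_apply, lmap_apply, Prod.ext_iff]
  constructor
  · show a/(a^2+b^2) * (a * w.1 + b * w.2) + -b/(a^2+b^2) * (-b * w.1 + a * w.2) = w.1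
    field_simp
    ring
  · show b/(a^2+b^2) * (a * w.1 + b * w.2) + a/(a^2+b^2) * (-b * w.1 + a * w.2) = w.2
    field_simp
    ring

lemma lmap_inv_right (a b : ℝ) (hd : a^2+b^2 ≠ 0) (x : ℝ × ℝ) :
    lmap a b (-b) a (lmap (a/(a^2+b^2)) (-b/(a^2+b^2)) (b/(a^2+b^2)) (a/(a^2+b^2)) x) = x := by
  rw [lmap_apply, lmap_apply, Prod.ext_iff]
  constructor
  · show a * (a/(a^2+b^2) * x.1 + -b/(a^2+b^2) * x.2)
        + b * (b/(a^2+b^2) * x.1 + a/(a^2+b^2) * x.2) = x.1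
    field_simp
    ring
  · show -b * (a/(a^2+b^2) * x.1 + -b/(a^2+b^2) * x.2)
        + a * (b/(a^2+b^2) * x.1 + a/(a^2+b^2) * x.2) = x.2
    field_simp
    ring

lemma arith_final (M L D c : ℝ) (h : M * D * c ≤ 4 * D * (L * c)) (hD : 0 < D)
    (hc : 0 < c) : M ≤ 4 * L := by
  nlinarith [mul_pos hD hc]

/-- Two norms on `ℝ²` with unit balls of equal area, one dominated by `L` times
the other, are comparable with constant `4L` in the other direction. -/
theorem norms_equal_area_comparable (N N' : Seminorm ℝ (ℝ × ℝ))
    (hN : ∀ v : ℝ × ℝ, N v = 0 → v = 0) (hN' : ∀ v : ℝ × ℝ, N' v = 0 → v = 0)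
    (L : ℝ) (hL : 1 ≤ L)
    (harea : volume {v : ℝ × ℝ | N v ≤ 1} = volume {v : ℝ × ℝ | N' v ≤ 1})
    (hle : ∀ v : ℝ × ℝ, N' v ≤ L * N v) :
    ∀ v : ℝ × ℝ, N v ≤ 4 * L * N' v := by
  have hsmul : ∀ (p : Seminorm ℝ (ℝ × ℝ)) (c : ℝ) (x : ℝ × ℝ), p (c • x) = |c| * p x :=
    fun p c x => by rw [map_smul_eq_mul, Real.norm_eq_abs]
  intro v
  by_contra hcon
  push_neg at hcon
  have hL0 : (0:ℝ) < L := lt_of_lt_of_le one_pos hL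
  have hv0 : v ≠ 0 := by
    rintro rfl
    simp only [map_zero, mul_zero] at hcon
    exact absurd hcon (lt_irrefl 0)
  have hN'v : 0 < N' v :=
    lt_of_le_of_ne (apply_nonneg _ _) (fun h => hv0 (hN' v h.symm))
  set z : ℝ × ℝ := (N' v)⁻¹ • v with hzdef
  have hz0 : z ≠ 0 := smul_ne_zero (inv_ne_zero hN'v.ne') hv0
  have hN'z : N' z = 1 := by
    rw [hzdef, map_smul_eq_mul, Real.norm_eq_abs, abs_of_pos (inv_pos.2 hN'v),
      inv_mul_cancel₀ hN'v.ne']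
  set M : ℝ := N z with hMdef
  have hM4L : 4 * L < M := by
    have h1 : M = (N' v)⁻¹ * N v := by
      rw [hMdef, hzdef, map_smul_eq_mul, Real.norm_eq_abs, abs_of_pos (inv_pos.2 hN'v)]
    rw [h1, lt_inv_mul_iff₀ hN'v]
    calc N' v * (4 * L) = 4 * L * N' v := by ring
    _ < N v := hcon
  have hM0 : 0 < M := by nlinarith
  -- Hahn-Banach
  obtain ⟨f, hfz, hfle⟩ : ∃ f : (ℝ × ℝ) →ₗ[ℝ] ℝ, f z = M ∧ ∀ w, f w ≤ N w := by
    have hdom : ∀ x : (LinearPMap.mkSpanSingleton (K := ℝ) (σ := RingHom.id ℝ) z M hz0).domain,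
        (LinearPMap.mkSpanSingleton (K := ℝ) (σ := RingHom.id ℝ) z M hz0) x ≤ N x := by
      rintro ⟨x, hx⟩
      obtain ⟨c, rfl⟩ := Submodule.mem_span_singleton.1 hx
      rw [LinearPMap.mkSpanSingleton'_apply, RingHom.id_apply]
      have hNcz : N (c • z) = |c| * M := by
        rw [map_smul_eq_mul, hMdef, Real.norm_eq_abs]
      rw [hNcz, smul_eq_mul]
      exact mul_le_mul_of_nonneg_right (le_abs_self c) hM0.le
    obtain ⟨g, hg1, hg2⟩ := exists_extension_of_le_sublinear
      (LinearPMap.mkSpanSingleton z M hz0) N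
      (fun c hc x => by rw [map_smul_eq_mul, Real.norm_eq_abs, abs_of_pos hc])
      (fun x y => map_add_le_add N x y) hdom
    refine ⟨g, ?_, hg2⟩
    have := hg1 ⟨z, Submodule.mem_span_singleton_self z⟩
    rw [LinearPMap.mkSpanSingleton_apply] at this
    exact this
  have habs : ∀ w, |f w| ≤ N w := by
    intro w
    rw [abs_le]
    refine ⟨?_, hfle w⟩
    have h := hfle (-w)
    rw [map_neg, map_neg_eq_map] at h
    linarith
  set a : ℝ := f (1, 0) with hadef
  set b : ℝ := f (0, 1) with hbdef
  have hf_eq : ∀ w : ℝ × ℝ, f w = a * w.1 + b * w.2 := by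
    intro w
    have hw : w = w.1 • ((1:ℝ), (0:ℝ)) + w.2 • ((0:ℝ), (1:ℝ)) := by
      simp [Prod.ext_iff]
    calc f w = f (w.1 • ((1:ℝ), (0:ℝ)) + w.2 • ((0:ℝ), (1:ℝ))) := by rw [← hw]
    _ = w.1 * a + w.2 * b := by
        rw [map_add, LinearMap.map_smul, LinearMap.map_smul, smul_eq_mul, smul_eq_mul]
    _ = a * w.1 + b * w.2 := by ring
  set u : ℝ × ℝ := (-b, a) with hudef
  have hu0 : u ≠ 0 := by
    intro h
    rw [hudef] at h
    simp only [Prod.ext_iff, Prod.fst_zero, Prod.snd_zero, neg_eq_zero] at h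
    obtain ⟨h1, h2⟩ := h
    have : f z = 0 := by rw [hf_eq, h1, h2]; ring
    rw [hfz] at this
    exact hM0.ne' this
  set c₀ : ℝ := N u with hc₀def
  have hc₀ : 0 < c₀ :=
    lt_of_le_of_ne (apply_nonneg _ _) (fun h => hu0 (hN u h.symm))
  have hd : 0 < a ^ 2 + b ^ 2 := by
    rcases eq_or_ne a 0 with ha | ha
    · rcases eq_or_ne b 0 with hb | hb
      · exact absurd (by rw [hudef, ha, hb]; simp : u = 0) hu0
      · positivity
    · positivity
  set e : (ℝ × ℝ) →ₗ[ℝ] (ℝ × ℝ) := lmap a b (-b) a with hedef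
  have he_fst : ∀ w : ℝ × ℝ, (e w).1 = f w := by
    intro w; rw [hedef, lmap_apply, hf_eq]
  have hsolve : ∀ (x : ℝ × ℝ) (t : ℝ), e x = (0, t) → (a ^ 2 + b ^ 2) • x = t • u := by
    intro x t hx
    rw [hedef, lmap_apply, Prod.ext_iff] at hx
    obtain ⟨h1, h2⟩ := hx
    simp only at h1 h2
    rw [hudef, Prod.ext_iff]
    constructor
    · show (a ^ 2 + b ^ 2) * x.1 = t * (-b)
      linear_combination a * h1 - b * h2
    · show (a ^ 2 + b ^ 2) * x.2 = t * a
      linear_combination b * h1 + a * h2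
  set K : Set (ℝ × ℝ) := {w : ℝ × ℝ | N w ≤ 1} with hKdef
  set K' : Set (ℝ × ℝ) := {w : ℝ × ℝ | N' w ≤ 1} with hK'def
  set ρ : ℝ := (a ^ 2 + b ^ 2) / (L * c₀) with hρdef
  set r : ℝ := (a ^ 2 + b ^ 2) / c₀ with hrdef
  have hρ0 : 0 < ρ := div_pos hd (mul_pos hL0 hc₀)
  have hr0 : 0 < r := div_pos hd hc₀
  set w₀ : ℝ × ℝ := (L * c₀)⁻¹ • u with hw₀def
  have hNw₀ : N w₀ = 1 / L := by
    rw [hw₀def, hsmul N, abs_of_pos (inv_pos.2 (mul_pos hL0 hc₀)), ← hc₀def]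
    field_simp
  have hw₀K' : N' w₀ ≤ 1 := by
    calc N' w₀ ≤ L * N w₀ := hle w₀
    _ = 1 := by rw [hNw₀]; field_simp
  have hew₀ : e w₀ = (0, ρ) := by
    rw [hw₀def, LinearMap.map_smul, hedef, hudef, lmap_apply]
    simp only [Prod.smul_mk, smul_eq_mul]
    rw [Prod.ext_iff]
    constructor
    · show (L * c₀)⁻¹ * (a * -b + b * a) = 0
      ring
    · show (L * c₀)⁻¹ * (-b * -b + a * a) = ρ
      rw [hρdef]
      field_simp
      ring
  set y₂ : ℝ := -b * z.1 + a * z.2 with hy₂def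
  have hez : e z = (M, y₂) := by
    rw [hedef, lmap_apply, Prod.ext_iff]
    refine ⟨?_, rfl⟩
    show a * z.1 + b * z.2 = M
    rw [← hf_eq z, hfz]
  set A : (ℝ × ℝ) →ₗ[ℝ] (ℝ × ℝ) := lmap M 0 y₂ ρ with hAdef
  set Q : Set (ℝ × ℝ) := Icc (-(1/2):ℝ) (1/2) ×ˢ Icc (-(1/2):ℝ) (1/2) with hQdef
  have hQvol : volume Q = 1 := by
    rw [hQdef, Measure.volume_eq_prod, Measure.prod_prod, Real.volume_Icc]
    norm_num
  have hsub : A '' Q ⊆ e '' K' := by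
    rintro x ⟨⟨s, t⟩, hst, rfl⟩
    rw [hQdef, Set.mem_prod] at hst
    obtain ⟨hs, ht⟩ := hst
    have hs' : |s| ≤ 1/2 := abs_le.2 ⟨by simpa using hs.1, hs.2⟩
    have ht' : |t| ≤ 1/2 := abs_le.2 ⟨by simpa using ht.1, ht.2⟩
    refine ⟨s • z + t • w₀, ?_, ?_⟩
    · show N' (s • z + t • w₀) ≤ 1
      calc N' (s • z + t • w₀) ≤ N' (s • z) + N' (t • w₀) := map_add_le_add _ _ _
      _ = |s| * N' z + |t| * N' w₀ := by rw [hsmul N' s z, hsmul N' t w₀]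
      _ ≤ (1/2) * 1 + (1/2) * 1 := by
          apply add_le_add
          · rw [hN'z, mul_one, mul_one]; exact hs'
          · exact mul_le_mul ht' hw₀K' (apply_nonneg _ _) (by norm_num)
      _ = 1 := by norm_num
    · have hlin : e (s • z + t • w₀) = s • e z + t • e w₀ := by
        rw [map_add, LinearMap.map_smul e s z, LinearMap.map_smul e t w₀]
      rw [hlin, hez, hew₀, hAdef, lmap_apply]
      simp only [Prod.smul_mk, smul_eq_mul, Prod.mk_add_mk, Prod.ext_iff]
      constructor <;> ring
  have hlow : ENNReal.ofReal (M * ρ) ≤ volume (e '' K') := by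
    have h1 : volume (A '' Q) = ENNReal.ofReal (M * ρ) := by
      rw [Measure.addHaar_image_linearMap, hAdef, lmap_det, hQvol, mul_one]
      congr 1
      rw [zero_mul, sub_zero, abs_of_nonneg (by positivity)]
    rw [← h1]
    exact measure_mono hsub
  -- continuity of N
  have hNcont : Continuous fun w : ℝ × ℝ => N w := by
    have habs2 : ∀ x y : ℝ × ℝ, |N x - N y| ≤ N (x - y) := fun x y => abs_sub_map_le_sub N x y
    have hb : ∀ w : ℝ × ℝ, N w ≤ (N (1,0) + N (0,1)) * ‖w‖ := by
      intro w
      have hw : w = w.1 • ((1:ℝ),(0:ℝ)) + w.2 • ((0:ℝ),(1:ℝ)) := by simp [Prod.ext_iff]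
      calc N w = N (w.1 • ((1:ℝ),(0:ℝ)) + w.2 • ((0:ℝ),(1:ℝ))) := by rw [← hw]
      _ ≤ N (w.1 • ((1:ℝ),(0:ℝ))) + N (w.2 • ((0:ℝ),(1:ℝ))) := map_add_le_add _ _ _
      _ = |w.1| * N (1,0) + |w.2| * N (0,1) := by rw [hsmul, hsmul]
      _ ≤ ‖w‖ * N (1,0) + ‖w‖ * N (0,1) := by
          apply add_le_add
          · exact mul_le_mul_of_nonneg_right ((Real.norm_eq_abs w.1) ▸ norm_fst_le w)
              (apply_nonneg _ _)
          · exact mul_le_mul_of_nonneg_right ((Real.norm_eq_abs w.2) ▸ norm_snd_le w)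
              (apply_nonneg _ _)
      _ = (N (1,0) + N (0,1)) * ‖w‖ := by ring
    have hC : (0:ℝ) ≤ N (1,0) + N (0,1) := by positivity
    apply (LipschitzWith.of_dist_le_mul (K := (N (1,0) + N (0,1)).toNNReal) ?_).continuous
    intro x y
    rw [Real.dist_eq, Real.coe_toNNReal _ hC]
    calc |N x - N y| ≤ N (x - y) := habs2 x y
    _ ≤ (N (1,0) + N (0,1)) * ‖x - y‖ := hb _
    _ = (N (1,0) + N (0,1)) * dist x y := by rw [dist_eq_norm]
  -- inverse of e
  set einv : (ℝ × ℝ) →ₗ[ℝ] (ℝ × ℝ) :=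
    lmap (a/(a^2+b^2)) (-b/(a^2+b^2)) (b/(a^2+b^2)) (a/(a^2+b^2)) with heinvdef
  have h_inv : ∀ w : ℝ × ℝ, einv (e w) = w := fun w => lmap_inv_left a b hd.ne' w
  have h_inv2 : ∀ x : ℝ × ℝ, e (einv x) = x := fun x => lmap_inv_right a b hd.ne' x
  have himg : e '' K = einv ⁻¹' K := by
    ext x
    constructor
    · rintro ⟨w, hw, rfl⟩
      rw [Set.mem_preimage, h_inv w]
      exact hw
    · intro hx
      exact ⟨einv x, hx, h_inv2 x⟩
  have hKclosed : IsClosed K := by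
    rw [hKdef]
    exact isClosed_le hNcont continuous_const
  have hmeas : MeasurableSet (e '' K) := by
    rw [himg]
    exact (hKclosed.preimage einv.continuous_of_finiteDimensional).measurableSet
  -- Fubini upper bound
  have hup : volume (e '' K) ≤ ENNReal.ofReal (2 * r) * ENNReal.ofReal 2 := by
    have hKvol : volume (e '' K) = ∫⁻ t : ℝ, volume (Prod.mk t ⁻¹' (e '' K)) := by
      rw [Measure.volume_eq_prod, Measure.prod_apply hmeas]
    rw [hKvol]
    have hslice : ∀ t : ℝ, volume (Prod.mk t ⁻¹' (e '' K)) ≤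
        Set.indicator (Icc (-1:ℝ) 1) (fun _ => ENNReal.ofReal (2 * r)) t := by
      intro t
      by_cases hti : t ∈ Icc (-1:ℝ) 1
      · rw [Set.indicator_of_mem hti]
        refine le_trans (Real.volume_le_diam _) (EMetric.diam_le ?_)
        intro y hy y' hy'
        rw [Set.mem_preimage] at hy hy'
        obtain ⟨w, hwK, hw⟩ := hy
        obtain ⟨w', hw'K, hw'⟩ := hy'
        have hwK1 : N w ≤ 1 := hwK
        have hw'K1 : N w' ≤ 1 := hw'K
        have hsub2 : e (w - w') = (0, y - y') := by
          rw [map_sub, hw, hw']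
          simp [Prod.ext_iff]
        have hkey := hsolve _ _ hsub2
        have hNlhs : N ((a^2+b^2) • (w - w')) = (a^2+b^2) * N (w - w') := by
          rw [hsmul, abs_of_pos hd]
        have hNrhs : N ((y - y') • u) = |y - y'| * c₀ := by rw [hsmul, hc₀def]
        have hNeq : (a^2+b^2) * N (w - w') = |y - y'| * c₀ := by
          rw [← hNlhs, ← hNrhs, hkey]
        have hNw : N (w - w') ≤ 2 := by
          calc N (w - w') ≤ N w + N w' := map_sub_le_add _ _ _
          _ ≤ 1 + 1 := add_le_add hwK1 hw'K1
          _ = 2 := by norm_num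
        have hyy : |y - y'| ≤ 2 * r := by
          have h1 : |y - y'| * c₀ ≤ 2 * (a^2+b^2) := by nlinarith
          rw [hrdef, ← mul_div_assoc, le_div_iff₀ hc₀]
          exact h1
        calc edist y y' = ENNReal.ofReal |y - y'| := by rw [edist_dist, Real.dist_eq]
        _ ≤ ENNReal.ofReal (2*r) := ENNReal.ofReal_le_ofReal hyy
      · rw [Set.indicator_of_notMem hti]
        have hempty : Prod.mk t ⁻¹' (e '' K) = ∅ := by
          ext y
          simp only [Set.mem_preimage, Set.mem_empty_iff_false, iff_false]
          rintro ⟨w, hwK, hw⟩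
          have hwK1 : N w ≤ 1 := hwK
          have h1 : |f w| ≤ 1 := le_trans (habs w) hwK1
          have h2 : f w = t := by rw [← he_fst, hw]
          rw [Set.mem_Icc] at hti
          rw [h2, abs_le] at h1
          exact hti h1
        rw [hempty]
        simp
    calc ∫⁻ t : ℝ, volume (Prod.mk t ⁻¹' (e '' K))
        ≤ ∫⁻ t : ℝ, Set.indicator (Icc (-1:ℝ) 1) (fun _ => ENNReal.ofReal (2 * r)) t :=
          lintegral_mono hslice
    _ = ENNReal.ofReal (2*r) * volume (Icc (-1:ℝ) 1) :=
          lintegral_indicator_const measurableSet_Icc _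
    _ = ENNReal.ofReal (2*r) * ENNReal.ofReal 2 := by
          rw [Real.volume_Icc]
          norm_num
  -- combine
  have himgK' : volume (e '' K') = volume (e '' K) := by
    rw [Measure.addHaar_image_linearMap, Measure.addHaar_image_linearMap, harea]
  have hfinal : ENNReal.ofReal (M * ρ) ≤ ENNReal.ofReal (2*r) * ENNReal.ofReal 2 :=
    (hlow.trans himgK'.le).trans hup
  rw [← ENNReal.ofReal_mul (by positivity)] at hfinal
  have hreal : M * ρ ≤ 2 * r * 2 :=
    (ENNReal.ofReal_le_ofReal_iff (by positivity)).1 hfinal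
  rw [hρdef, hrdef] at hreal
  have hM4L' : M ≤ 4 * L := by
    have hLc : 0 < L * c₀ := mul_pos hL0 hc₀
    have e1 : M * ((a^2+b^2)/(L*c₀)) = (M * (a^2+b^2)) / (L*c₀) := by ring
    have e2 : 2 * ((a^2+b^2)/c₀) * 2 = (4 * (a^2+b^2)) / c₀ := by ring
    rw [e1, e2, div_le_div_iff₀ hLc hc₀] at hreal
    exact arith_final M L (a^2+b^2) c₀ hreal hd hc₀
  linarith
end
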